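/- arXiv:0706.2421 — 5 statements merged into one kernel-verified Lean document; each statement's English description precedes it below -/
import Mathlib

section
/- Fix an integer n ≥ 3 and define φₙ : ℕ+ → ℕ by φₙ(m) = 2^m − 1 for 1 ≤ m ≤ n−1 and φₙ(n+k) = ∑_{j=1}^{n-1} φₙ(n+k−j) for all k ≥ 0. Then for every positive integer m, ∑_{d | m} μ(m/d) φₙ(d) ≡ 0 (mod m). -/
/-!
Write `K = n - 1`. Then `φₙ(m)` is the number of cyclic binary words of length `m` in which no
`K` cyclically consecutive letters are all `true`, i.e. the number of points of period `m` of the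
shift on the bi-infinite sequences with this property. Indeed, reading such a word from the run of
`true`s that ends just before position `0` gives a linear word that splits into blocks
`true^r false` with `r < K`; splitting off the first block yields the recursion of `φₙ`, and for
`m ≤ K` the condition only excludes the constant word `true`.

For any map `f` with finitely many points of each period, Möbius inversion turns
`∑_{d ∣ m} μ(m/d) #Fix(f^d)` into the number of points of least period `m`, and these fall into
orbits of exactly `m` points.
-/

open Finset Function ArithmeticFunction

theorem Nat.sInf_eq_iff_isLeast {s : Set ℕ} {p : ℕ} (hs : s.Nonempty) :
    sInf s = p ↔ IsLeast s p :=
  ⟨fun h => h ▸ ⟨Nat.sInf_mem hs, fun _ => Nat.sInf_le⟩, IsLeast.csInf_eq⟩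

theorem natCast_sub_natCast_of_lt {R : Type*} [Ring R] {i o : ℕ} (h : i < o) :
    (i : R) - o = -1 - ((o - 1 - i : ℕ) : R) := by
  rw [Nat.cast_sub (by omega), Nat.cast_sub (by omega)]
  push_cast
  abel

theorem ZMod.natCast_self_sub_one (n : ℕ) [NeZero n] : ((n - 1 : ℕ) : ZMod n) = -1 := by
  rw [Nat.cast_sub NeZero.one_le, ZMod.natCast_self, Nat.cast_one, zero_sub]

theorem Finset.sum_Icc_one_eq_sum_range {M : Type*} [AddCommMonoid M] (n : ℕ) (g : ℕ → M) :
    ∑ i ∈ Icc 1 n, g i = ∑ j ∈ range n, g (j + 1) := by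
  rw [range_eq_Ico, sum_Ico_add' g 0 n 1]
  rfl

theorem Function.Periodic.apply_val_intCast {α : Type*} {x : ℤ → α} {d : ℕ} [NeZero d]
    (hx : Periodic x d) (z : ℤ) : x ((z : ZMod d).val) = x z := by
  rw [ZMod.val_intCast, Int.emod_def, mul_comm]
  simpa using hx.sub_int_mul_eq (z / d)

namespace Function

variable {α : Type*} (f : α → α)

theorem card_toFinset_periodicOrbit [DecidableEq α] (x : α) :
    #(periodicOrbit f x).toFinset = minimalPeriod f x := by
  have hnodup := nodup_periodicOrbit (f := f) (x := x)
  rw [periodicOrbit, Cycle.nodup_coe_iff] at hnodup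
  rw [periodicOrbit, Cycle.coe_toFinset, List.toFinset_card_of_nodup hnodup, List.length_map,
    List.length_range]

theorem mem_toFinset_periodicOrbit [DecidableEq α] {x y : α} :
    y ∈ (periodicOrbit f x).toFinset ↔ y ∈ periodicOrbit f x := by
  rw [periodicOrbit, Cycle.coe_toFinset, List.mem_toFinset, Cycle.mem_coe_iff]

theorem dvd_ncard_setOf_minimalPeriod_eq {m : ℕ} (hm : 0 < m) :
    m ∣ {x | minimalPeriod f x = m}.ncard := by
  classical
  obtain hfin | hinf := Set.finite_or_infinite {x | minimalPeriod f x = m}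
  swap
  · simp [hinf.ncard]
  have hP {x} : x ∈ hfin.toFinset ↔ minimalPeriod f x = m := by simp
  have periodic {x} (hx : x ∈ hfin.toFinset) : x ∈ periodicPts f :=
    minimalPeriod_pos_iff_mem_periodicPts.mp (hP.1 hx ▸ hm)
  have fiber {x} (hx : x ∈ hfin.toFinset) :
      {y ∈ hfin.toFinset | (periodicOrbit f y).toFinset = (periodicOrbit f x).toFinset} =
        (periodicOrbit f x).toFinset := by
    ext y
    rw [mem_filter]
    constructor
    · rintro ⟨hy, hyx⟩
      rw [← hyx, mem_toFinset_periodicOrbit]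
      exact self_mem_periodicOrbit (periodic hy)
    · rw [mem_toFinset_periodicOrbit, mem_periodicOrbit_iff (periodic hx)]
      rintro ⟨n, rfl⟩
      exact ⟨hP.2 ((minimalPeriod_apply_iterate (periodic hx) n).trans (hP.1 hx)),
        by rw [periodicOrbit_apply_iterate_eq (periodic hx)]⟩
  rw [Set.ncard_eq_toFinset_card _ hfin,
    card_eq_sum_card_image (fun x => (periodicOrbit f x).toFinset)]
  refine dvd_sum fun o ho => ?_
  obtain ⟨x, hx, rfl⟩ := mem_image.1 ho
  rw [fiber hx, card_toFinset_periodicOrbit, hP.1 hx]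

theorem ncard_ptsOfPeriod_eq_sum_divisors {d : ℕ} (hd : 0 < d)
    (hfin : (ptsOfPeriod f d).Finite) :
    (ptsOfPeriod f d).ncard = ∑ e ∈ d.divisors, {x | minimalPeriod f x = e}.ncard := by
  classical
  rw [Set.ncard_eq_toFinset_card _ hfin, card_eq_sum_card_fiberwise (f := minimalPeriod f)
    (t := d.divisors)]
  · refine sum_congr rfl fun e he => ?_
    rw [← Set.ncard_coe_finset]
    congr 1
    ext x
    simp only [coe_filter, Set.Finite.mem_toFinset, mem_ptsOfPeriod, Set.mem_ofPred_eq]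
    refine ⟨fun h => h.2, fun h => ⟨?_, h⟩⟩
    exact isPeriodicPt_iff_minimalPeriod_dvd.2 (h ▸ Nat.dvd_of_mem_divisors he)
  · intro x hx
    simp only [Set.Finite.coe_toFinset, mem_ptsOfPeriod] at hx
    exact Nat.mem_divisors.2 ⟨isPeriodicPt_iff_minimalPeriod_dvd.1 hx, hd.ne'⟩

theorem dvd_sum_moebius_mul_ncard_ptsOfPeriod (hfin : ∀ d, 0 < d → (ptsOfPeriod f d).Finite)
    {m : ℕ} (hm : 0 < m) :
    (m : ℤ) ∣ ∑ d ∈ m.divisors, moebius (m / d) * ((ptsOfPeriod f d).ncard : ℤ) := by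
  have inversion := (sum_eq_iff_sum_mul_moebius_eq (R := ℤ)
    (f := fun e => ({x | minimalPeriod f x = e}.ncard : ℤ))
    (g := fun d => ((ptsOfPeriod f d).ncard : ℤ))).1 (fun d hd => by
      exact_mod_cast (ncard_ptsOfPeriod_eq_sum_divisors f hd (hfin d hd)).symm) m hm
  simp only [Int.cast_id] at inversion
  rw [Nat.sum_divisorsAntidiagonal'
    (fun a b => moebius a * ((ptsOfPeriod f b).ncard : ℤ))] at inversion
  rw [inversion]
  exact_mod_cast dvd_ncard_setOf_minimalPeriod_eq f hm

end Function

/-- No `K` consecutive letters of `w` are `true`; over `ZMod m` the word is read cyclically. -/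
def NoRunOfLength (K : ℕ) {G : Type*} [AddMonoidWithOne G] (w : G → Bool) : Prop :=
  ∀ i : G, ∃ j < K, w (i + j) = false

theorem NoRunOfLength.comp_add_right {K : ℕ} {G : Type*} [AddCommMonoidWithOne G] {w : G → Bool}
    (hw : NoRunOfLength K w) (c : G) : NoRunOfLength K (fun i => w (i + c)) := fun i => by
  obtain ⟨j, hj, h⟩ := hw (i + c)
  exact ⟨j, hj, show w (i + j + c) = false by rwa [add_right_comm]⟩

theorem noRunOfLength_comp_intCast_iff {K d : ℕ} (w : ZMod d → Bool) :
    NoRunOfLength K (fun z : ℤ => w z) ↔ NoRunOfLength K w := by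
  constructor
  · intro h i
    obtain ⟨z, rfl⟩ := ZMod.intCast_surjective i
    simpa using h z
  · intro h z
    simpa using h z

abbrev NoRunSeq (K : ℕ) := {x : ℤ → Bool // NoRunOfLength K x}

def runShift (K : ℕ) (x : NoRunSeq K) : NoRunSeq K :=
  ⟨fun z => x.1 (z + 1), x.2.comp_add_right 1⟩

theorem runShift_iterate_apply (K d : ℕ) (x : NoRunSeq K) (z : ℤ) :
    ((runShift K)^[d] x).1 z = x.1 (z + d) := by
  induction d generalizing z with
  | zero => simp
  | succ d ih =>
    rw [iterate_succ_apply', runShift, ih, Nat.cast_succ, add_comm (d : ℤ), add_assoc]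

theorem isPeriodicPt_runShift_iff {K d : ℕ} {x : NoRunSeq K} :
    IsPeriodicPt (runShift K) d x ↔ Periodic x.1 d := by
  rw [IsPeriodicPt, IsFixedPt, Subtype.ext_iff, funext_iff]
  simp only [runShift_iterate_apply]
  rfl

def ptsOfPeriodRunShiftEquiv (K d : ℕ) [NeZero d] :
    ptsOfPeriod (runShift K) d ≃ {w : ZMod d → Bool // NoRunOfLength K w} where
  toFun x := ⟨fun i => x.1.1 i.val, by
    rw [← noRunOfLength_comp_intCast_iff]
    simpa only [(isPeriodicPt_runShift_iff.1 x.2).apply_val_intCast] using x.1.2⟩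
  invFun w := ⟨⟨fun z => w.1 z, (noRunOfLength_comp_intCast_iff w.1).2 w.2⟩,
    isPeriodicPt_runShift_iff.2 fun z => by simp⟩
  left_inv x := by
    ext z
    exact (isPeriodicPt_runShift_iff.1 x.2).apply_val_intCast z
  right_inv w := by
    ext i
    simp

/-- A word of length `q` is encoded by the positions of its letters `false`; the block words are
the concatenations of blocks `true^r false` with `r < K`. -/
def blockWords (K q : ℕ) : Finset (Finset ℕ) :=
  (range q).powerset.filter fun S => ∀ i < q, ∃ j < K, i + j ∈ S

def blockCount (K q o : ℕ) : ℕ :=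
  #{S ∈ blockWords K q | ∀ i < o, i ∉ S}

theorem mem_blockWords {K q : ℕ} {S : Finset ℕ} :
    S ∈ blockWords K q ↔ S ⊆ range q ∧ ∀ i < q, ∃ j < K, i + j ∈ S := by
  rw [blockWords, mem_filter, mem_powerset]

/-- Prepends the block `true^p false`. -/
def consBlock (p : ℕ) (T : Finset ℕ) : Finset ℕ := insert p (T.image (· + (p + 1)))

def dropBlock (p : ℕ) (S : Finset ℕ) : Finset ℕ := (S.filter (p < ·)).image (· - (p + 1))

theorem isLeast_consBlock (p : ℕ) (T : Finset ℕ) : IsLeast (consBlock p T : Set ℕ) p := by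
  refine ⟨mem_insert_self _ _, fun x hx => ?_⟩
  simp only [consBlock, coe_insert, coe_image, Set.mem_insert_iff, Set.mem_image] at hx
  rcases hx with rfl | ⟨y, -, rfl⟩ <;> omega

theorem consBlock_mem_blockWords {K q p : ℕ} {T : Finset ℕ} (hpK : p < K)
    (hT : T ∈ blockWords K q) : consBlock p T ∈ blockWords K (p + 1 + q) := by
  obtain ⟨hTq, hwin⟩ := mem_blockWords.1 hT
  refine mem_blockWords.2 ⟨fun x hx => ?_, fun i hi => ?_⟩
  · rcases mem_insert.1 hx with rfl | hx
    · exact mem_range.2 (by omega)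
    · obtain ⟨y, hy, rfl⟩ := mem_image.1 hx
      have := mem_range.1 (hTq hy)
      exact mem_range.2 (by omega)
  · rcases le_or_gt i p with hip | hpi
    · exact ⟨p - i, by omega, by rw [Nat.add_sub_cancel' hip]; exact mem_insert_self _ _⟩
    · obtain ⟨j, hj, hjT⟩ := hwin (i - (p + 1)) (by omega)
      exact ⟨j, hj, mem_insert_of_mem (mem_image.2 ⟨_, hjT, by omega⟩)⟩

theorem dropBlock_mem_blockWords {K q p : ℕ} {S : Finset ℕ}
    (hS : S ∈ blockWords K (p + 1 + q)) : dropBlock p S ∈ blockWords K q := by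
  obtain ⟨hSq, hwin⟩ := mem_blockWords.1 hS
  refine mem_blockWords.2 ⟨fun x hx => ?_, fun i hi => ?_⟩
  · obtain ⟨y, hy, rfl⟩ := mem_image.1 hx
    have := mem_range.1 (hSq (mem_filter.1 hy).1)
    have := (mem_filter.1 hy).2
    exact mem_range.2 (by omega)
  · obtain ⟨j, hj, hjS⟩ := hwin (i + p + 1) (by omega)
    exact ⟨j, hj, mem_image.2 ⟨i + p + 1 + j, mem_filter.2 ⟨hjS, by omega⟩, by omega⟩⟩

theorem consBlock_dropBlock {p : ℕ} {S : Finset ℕ} (hS : IsLeast (S : Set ℕ) p) :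
    consBlock p (dropBlock p S) = S := by
  ext x
  simp only [consBlock, dropBlock, mem_insert, mem_image, mem_filter]
  constructor
  · rintro (rfl | ⟨_, ⟨y, ⟨hy, hpy⟩, rfl⟩, rfl⟩)
    · exact hS.1
    · rwa [Nat.sub_add_cancel hpy]
  · intro hx
    rcases (hS.2 hx).eq_or_lt with rfl | hpx
    · exact Or.inl rfl
    · exact Or.inr ⟨x - (p + 1), ⟨x, ⟨hx, hpx⟩, rfl⟩, by omega⟩

theorem dropBlock_consBlock (p : ℕ) (T : Finset ℕ) : dropBlock p (consBlock p T) = T := by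
  ext x
  simp only [consBlock, dropBlock, mem_image, mem_filter, mem_insert]
  constructor
  · rintro ⟨y, ⟨rfl | ⟨z, hz, rfl⟩, hy⟩, rfl⟩
    · omega
    · simpa using hz
  · intro hx
    exact ⟨x + (p + 1), ⟨Or.inr ⟨x, hx, rfl⟩, by omega⟩, by omega⟩

theorem card_blockWords_filter_sInf_eq {K q p : ℕ} (hpK : p < K) :
    #((blockWords K (p + 1 + q)).filter fun S : Finset ℕ => sInf (S : Set ℕ) = p) =
      #(blockWords K q) := by
  refine card_nbij' (dropBlock p) (consBlock p) (fun S hS => ?_) (fun T hT => ?_)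
    (fun S hS => ?_) (fun T _ => dropBlock_consBlock p T)
  · exact dropBlock_mem_blockWords (mem_filter.1 hS).1
  · exact mem_filter.2 ⟨consBlock_mem_blockWords hpK hT, (isLeast_consBlock p T).csInf_eq⟩
  · obtain ⟨hSw, hmin⟩ := mem_filter.1 hS
    obtain ⟨j, -, hj⟩ := (mem_blockWords.1 hSw).2 0 (by omega)
    exact consBlock_dropBlock ((Nat.sInf_eq_iff_isLeast ⟨_, hj⟩).1 hmin)


theorem blockCount_zero (K q : ℕ) : blockCount K q 0 = #(blockWords K q) := by
  rw [blockCount, filter_true_of_mem fun S _ i hi => absurd hi (Nat.not_lt_zero i)]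

theorem blockCount_eq_sum {K q o : ℕ} (hq : 0 < q) :
    blockCount K q o = ∑ p ∈ (Ico o K).filter (· < q), blockCount K (q - 1 - p) 0 := by
  rw [blockCount, card_eq_sum_card_fiberwise (f := fun S : Finset ℕ => sInf (S : Set ℕ))]
  · refine sum_congr rfl fun p hp => ?_
    simp only [mem_filter, mem_Ico] at hp
    rw [blockCount_zero, ← card_blockWords_filter_sInf_eq hp.1.2,
      show p + 1 + (q - 1 - p) = q by omega, filter_filter]
    congr 1
    refine filter_congr fun S _ => ⟨fun h => h.2, fun h => ⟨fun i hi => ?_, h⟩⟩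
    exact Nat.notMem_of_lt_sInf (h ▸ hi.trans_le hp.1.1)
  · intro S hS
    simp only [coe_filter, mem_blockWords, Set.mem_ofPred_eq] at hS
    obtain ⟨⟨hSq, hwin⟩, hlead⟩ := hS
    obtain ⟨j, hj, hjS⟩ := hwin 0 hq
    have hmem : sInf (S : Set ℕ) ∈ S := Nat.sInf_mem ⟨_, hjS⟩
    simp only [coe_filter, mem_Ico, Set.mem_ofPred_eq]
    refine ⟨⟨not_lt.1 fun h => hlead _ h hmem, ?_⟩, mem_range.1 (hSq hmem)⟩
    exact (Nat.sInf_le (s := (S : Set ℕ)) hjS).trans_lt (by omega)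

theorem blockCount_eq_sum_blockCount_sub {K m : ℕ} (o : ℕ) (hKm : K < m) :
    blockCount K m o = ∑ i ∈ Icc 1 K, blockCount K (m - i) o := by
  have expand {q : ℕ} (hq : 0 < q) (o : ℕ) : blockCount K q o =
      ∑ p ∈ Ico o K, if p < q then blockCount K (q - 1 - p) 0 else 0 := by
    rw [blockCount_eq_sum hq, sum_filter]
  calc blockCount K m o
      = ∑ p ∈ Ico o K, ∑ j ∈ range K,
          if p + j + 1 < m then blockCount K (m - 2 - p - j) 0 else 0 := by
        rw [expand (by omega)]
        refine sum_congr rfl fun p hp => ?_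
        rw [mem_Ico] at hp
        rw [if_pos (by omega), expand (by omega), range_eq_Ico]
        refine sum_congr rfl fun j _ => ?_
        split_ifs <;> first | omega | (congr 1; omega)
    _ = ∑ j ∈ range K, ∑ p ∈ Ico o K,
          if p < m - (j + 1) then blockCount K (m - (j + 1) - 1 - p) 0 else 0 := by
        rw [sum_comm]
        refine sum_congr rfl fun j _ => sum_congr rfl fun p _ => ?_
        split_ifs <;> first | omega | (congr 1; omega)
    _ = ∑ i ∈ Icc 1 K, blockCount K (m - i) o := by
        rw [sum_Icc_one_eq_sum_range]
        refine sum_congr rfl fun j hj => (expand (q := m - (j + 1)) ?_ o).symm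
        rw [mem_range] at hj
        omega

def ofFalseSet (m : ℕ) (S : Finset ℕ) : ZMod m → Bool := fun x => decide (x.val ∉ S)

theorem ofFalseSet_eq_false_iff {m : ℕ} {S : Finset ℕ} (x : ZMod m) :
    ofFalseSet m S x = false ↔ x.val ∈ S := by
  simp [ofFalseSet]

def falseSet {m : ℕ} (w : ZMod m → Bool) : Finset ℕ := {t ∈ range m | w t = false}

theorem falseSet_ofFalseSet {m : ℕ} {S : Finset ℕ} (hS : S ⊆ range m) :
    falseSet (ofFalseSet m S) = S := by
  ext t
  simp only [falseSet, mem_filter, mem_range, ofFalseSet_eq_false_iff]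
  refine ⟨fun ⟨ht, h⟩ => by rwa [ZMod.val_natCast_of_lt ht] at h, fun ht => ?_⟩
  have htm := mem_range.1 (hS ht)
  exact ⟨htm, by rwa [ZMod.val_natCast_of_lt htm]⟩

section Cyclic

variable {K m : ℕ} [NeZero m]

instance : DecidablePred (NoRunOfLength K (G := ZMod m)) := fun w =>
  inferInstanceAs (Decidable (∀ i : ZMod m, ∃ j < K, w (i + j) = false))

noncomputable def trailingTrues (w : ZMod m → Bool) : ℕ := sInf {o : ℕ | w (-1 - o) = false}

theorem trailingTrues_eq_iff {w : ZMod m → Bool} (hw : ∃ i, w i = false) {o : ℕ} :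
    trailingTrues w = o ↔ w (-1 - o) = false ∧ ∀ i < o, w (-1 - i) = true := by
  obtain ⟨a, ha⟩ := hw
  have hne : {o : ℕ | w (-1 - o) = false}.Nonempty := ⟨(-1 - a).val, by simpa using ha⟩
  rw [trailingTrues, Nat.sInf_eq_iff_isLeast hne, IsLeast, mem_lowerBounds]
  refine and_congr_right fun _ => ⟨fun h i hi => ?_, fun h i hi => ?_⟩
  · exact Bool.not_eq_false _ |>.mp fun hf => (h i hf).not_gt hi
  · exact not_lt.1 fun hlt => by simp [h i hlt] at hi

theorem card_noRunOfLength_eq_sum :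
    #{w : ZMod m → Bool | NoRunOfLength K w} =
      ∑ o ∈ range K, #{w : ZMod m → Bool | NoRunOfLength K w ∧ trailingTrues w = o} := by
  rw [card_eq_sum_card_fiberwise (f := trailingTrues) (t := range K)]
  · simp only [filter_filter]
  · intro w hw
    simp only [coe_filter, mem_univ, true_and, Set.mem_ofPred_eq] at hw
    obtain ⟨j, hj, hwj⟩ := hw (-K)
    have : w (-1 - ((K - 1 - j : ℕ) : ZMod m)) = false := by
      rwa [← natCast_sub_natCast_of_lt hj, sub_eq_neg_add]
    exact mem_range.2 ((Nat.sInf_le this).trans_lt (by omega))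

theorem card_trailingTrues_eq_card_lastFalse (o : ℕ) :
    #{w : ZMod m → Bool | NoRunOfLength K w ∧ trailingTrues w = o} =
      #{w : ZMod m → Bool | NoRunOfLength K w ∧ w (-1) = false ∧ ∀ i < o, w i = true} := by
  refine card_nbij' (fun w i => w (i - o)) (fun w i => w (i + o)) ?_ ?_ ?_ ?_
  · intro w hw
    simp only [coe_filter, mem_univ, true_and, Set.mem_ofPred_eq] at hw ⊢
    obtain ⟨hrun, htrail⟩ := hw
    obtain ⟨j, -, hj⟩ := hrun 0
    obtain ⟨hlast, htrue⟩ := (trailingTrues_eq_iff ⟨_, hj⟩).1 htrail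
    refine ⟨by simpa only [sub_eq_add_neg] using hrun.comp_add_right (-o : ZMod m), hlast,
      fun i hi => ?_⟩
    rw [natCast_sub_natCast_of_lt hi]
    exact htrue _ (by omega)
  · intro w hw
    simp only [coe_filter, mem_univ, true_and, Set.mem_ofPred_eq] at hw ⊢
    obtain ⟨hrun, hlast, htrue⟩ := hw
    have hshift : ∀ i < o, w (-1 - i + o) = true := fun i hi => by
      rw [← htrue (o - 1 - i) (by omega), Nat.cast_sub (by omega), Nat.cast_sub (by omega)]
      congr 1
      push_cast
      ring
    have hlast' : w (-1 - o + o) = false := by simpa using hlast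
    have hne : ∃ i : ZMod m, w (i + o) = false := ⟨_, hlast'⟩
    exact ⟨hrun.comp_add_right o, (trailingTrues_eq_iff hne).2 ⟨hlast', hshift⟩⟩
  · intro w _
    simp
  · intro w _
    simp

theorem falseSet_mem_blockWords {w : ZMod m → Bool} (hrun : NoRunOfLength K w)
    (hlast : w (-1) = false) : falseSet w ∈ blockWords K m := by
  refine mem_blockWords.2 ⟨filter_subset _ _, fun i hi => ?_⟩
  simp only [falseSet, mem_filter, mem_range]
  obtain ⟨j, hj, hwj⟩ := hrun i
  by_cases hij : i + j < m
  · exact ⟨j, hj, hij, by rwa [Nat.cast_add]⟩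
  · refine ⟨m - 1 - i, by omega, by omega, ?_⟩
    rwa [Nat.add_sub_cancel' (by omega), ZMod.natCast_self_sub_one m]

theorem noRunOfLength_ofFalseSet {S : Finset ℕ} (hS : S ∈ blockWords K m) :
    NoRunOfLength K (ofFalseSet m S) ∧ ofFalseSet m S (-1) = false := by
  obtain ⟨hSm, hwin⟩ := mem_blockWords.1 hS
  have hval {t : ℕ} (ht : t ∈ S) : ((t : ZMod m)).val = t :=
    ZMod.val_natCast_of_lt (mem_range.1 (hSm ht))
  refine ⟨fun x => ?_, ?_⟩
  · obtain ⟨j, hj, hjS⟩ := hwin x.val x.val_lt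
    refine ⟨j, hj, (ofFalseSet_eq_false_iff _).2 ?_⟩
    rwa [show x + j = ((x.val + j : ℕ) : ZMod m) by simp, hval hjS]
  · obtain ⟨j, -, hjS⟩ := hwin (m - 1) (Nat.sub_one_lt (NeZero.ne m))
    obtain rfl : j = 0 := by have := mem_range.1 (hSm hjS); omega
    rw [add_zero] at hjS
    rw [ofFalseSet_eq_false_iff, ← ZMod.natCast_self_sub_one m, hval hjS]
    exact hjS

theorem ofFalseSet_falseSet (w : ZMod m → Bool) : ofFalseSet m (falseSet w) = w := by
  funext x
  simp [ofFalseSet, falseSet, x.val_lt]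

theorem card_lastFalse_eq_blockCount (o : ℕ) :
    #{w : ZMod m → Bool | NoRunOfLength K w ∧ w (-1) = false ∧ ∀ i < o, w i = true} =
      blockCount K m o := by
  refine card_nbij' falseSet (ofFalseSet m) (fun w hw => ?_) (fun S hS => ?_)
    (fun w _ => ofFalseSet_falseSet w) (fun S hS => falseSet_ofFalseSet ?_)
  · simp only [coe_filter, mem_univ, true_and, Set.mem_ofPred_eq] at hw ⊢
    obtain ⟨hrun, hlast, htrue⟩ := hw
    exact ⟨falseSet_mem_blockWords hrun hlast, fun i hi h => by
      simp [falseSet, htrue i hi] at h⟩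
  · simp only [coe_filter, mem_univ, true_and, Set.mem_ofPred_eq] at hS ⊢
    obtain ⟨hrun, hlast⟩ := noRunOfLength_ofFalseSet hS.1
    refine ⟨hrun, hlast, fun i hi => ?_⟩
    rw [← Bool.not_eq_false, ofFalseSet_eq_false_iff, ZMod.val_natCast]
    exact hS.2 _ ((Nat.mod_le i m).trans_lt hi)
  · exact (mem_blockWords.1 (mem_filter.1 hS).1).1

theorem noRunOfLength_iff_ne_const (hmK : m ≤ K) (w : ZMod m → Bool) :
    NoRunOfLength K w ↔ w ≠ fun _ => true := by
  refine ⟨fun h hw => ?_, fun h i => ?_⟩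
  · obtain ⟨j, -, hj⟩ := h 0
    simp [hw] at hj
  · obtain ⟨a, ha⟩ := Function.ne_iff.1 h
    refine ⟨(a - i).val, (a - i).val_lt.trans_le hmK, ?_⟩
    simpa using ha

end Cyclic

noncomputable def cyclicCount (K d : ℕ) : ℕ :=
  Nat.card {w : ZMod d → Bool // NoRunOfLength K w}

theorem cyclicCount_eq_card (K m : ℕ) [NeZero m] :
    cyclicCount K m = #{w : ZMod m → Bool | NoRunOfLength K w} := by
  rw [cyclicCount, Nat.card_eq_fintype_card, Fintype.card_subtype]

theorem cyclicCount_eq_sum_blockCount (K m : ℕ) [NeZero m] :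
    cyclicCount K m = ∑ o ∈ range K, blockCount K m o := by
  rw [cyclicCount_eq_card, card_noRunOfLength_eq_sum]
  exact sum_congr rfl fun o _ =>
    (card_trailingTrues_eq_card_lastFalse o).trans (card_lastFalse_eq_blockCount o)

theorem cyclicCount_eq_sum_sub {K m : ℕ} (hKm : K < m) :
    cyclicCount K m = ∑ i ∈ Icc 1 K, cyclicCount K (m - i) := by
  have : NeZero m := ⟨by omega⟩
  rw [cyclicCount_eq_sum_blockCount]
  simp_rw [blockCount_eq_sum_blockCount_sub _ hKm]
  rw [sum_comm]
  refine sum_congr rfl fun i hi => ?_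
  have : NeZero (m - i) := ⟨by simp at hi; omega⟩
  rw [cyclicCount_eq_sum_blockCount]

theorem cyclicCount_of_le {K m : ℕ} (hm : 0 < m) (hmK : m ≤ K) :
    (cyclicCount K m : ℤ) = 2 ^ m - 1 := by
  have : NeZero m := ⟨hm.ne'⟩
  rw [cyclicCount_eq_card]
  simp_rw [noRunOfLength_iff_ne_const hmK]
  rw [filter_ne', card_erase_of_mem (mem_univ _), card_univ, Fintype.card_fun, ZMod.card,
    Fintype.card_bool, Nat.cast_sub Nat.one_le_two_pow]
  push_cast
  rfl

theorem ncard_ptsOfPeriod_runShift (K : ℕ) {d : ℕ} (hd : 0 < d) :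
    (ptsOfPeriod (runShift K) d).ncard = cyclicCount K d :=
  have : NeZero d := ⟨hd.ne'⟩
  Nat.card_congr (ptsOfPeriodRunShiftEquiv K d)

theorem finite_ptsOfPeriod_runShift (K : ℕ) {d : ℕ} (hd : 0 < d) :
    (ptsOfPeriod (runShift K) d).Finite :=
  have : NeZero d := ⟨hd.ne'⟩
  have := Finite.of_equiv _ (ptsOfPeriodRunShiftEquiv K d).symm
  Set.toFinite _

theorem eq_of_recurrence {K : ℕ} {a b : ℕ → ℤ}
    (hinit : ∀ m, 0 < m → m ≤ K → a m = b m)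
    (ha : ∀ m, K < m → a m = ∑ i ∈ Icc 1 K, a (m - i))
    (hb : ∀ m, K < m → b m = ∑ i ∈ Icc 1 K, b (m - i)) :
    ∀ m, 0 < m → a m = b m := by
  intro m
  induction m using Nat.strong_induction_on with
  | _ m ih =>
    intro hm
    rcases le_or_gt m K with hmK | hKm
    · exact hinit m hm hmK
    · rw [ha m hKm, hb m hKm]
      exact sum_congr rfl fun i hi => by rw [mem_Icc] at hi; exact ih _ (by omega) (by omega)

theorem stmt_5_general (n : ℕ) (φ : ℕ → ℤ)
    (hinit : ∀ m : ℕ, 1 ≤ m → m ≤ n - 1 → φ m = 2 ^ m - 1)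
    (hrec : ∀ k : ℕ, φ (n + k) = ∑ j ∈ Finset.Icc 1 (n - 1), φ (n + k - j)) :
    ∀ m : ℕ, 1 ≤ m →
      (m : ℤ) ∣ ∑ d ∈ m.divisors, (ArithmeticFunction.moebius (m / d)) * φ d := by
  intro m hm
  have hφ : ∀ d, 0 < d → φ d = cyclicCount (n - 1) d :=
    eq_of_recurrence (fun d hd hdK => by rw [hinit d hd hdK, cyclicCount_of_le hd hdK])
      (fun d hd => by
        obtain ⟨k, rfl⟩ := Nat.exists_eq_add_of_le (show n ≤ d by omega)
        exact hrec k)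
      (fun d hd => by exact_mod_cast cyclicCount_eq_sum_sub hd)
  rw [sum_congr rfl fun d hd => by
    have hd := Nat.pos_of_mem_divisors hd
    rw [hφ d hd, ← ncard_ptsOfPeriod_runShift _ hd]]
  exact dvd_sum_moebius_mul_ncard_ptsOfPeriod _ (fun _ => finite_ptsOfPeriod_runShift _) hm

theorem stmt_5 (n : ℕ) (hn : 3 ≤ n) (φ : ℕ → ℤ)
    (hinit : ∀ m : ℕ, 1 ≤ m → m ≤ n - 1 → φ m = 2 ^ m - 1)
    (hrec : ∀ k : ℕ, φ (n + k) = ∑ j ∈ Finset.Icc 1 (n - 1), φ (n + k - j)) :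
    ∀ m : ℕ, 1 ≤ m →
      (m : ℤ) ∣ ∑ d ∈ m.divisors, (ArithmeticFunction.moebius (m / d)) * φ d :=
  stmt_5_general n φ hinit hrec
end

section
/- Let L(m) be the Lucas sequence defined by L(1) = 1, L(2) = 3, and L(m) = L(m−1) + L(m−2) for m ≥ 3. Then for every positive integer m, ∑_{d | m} μ(m/d) L(d) ≡ 0 (mod m). In particular, for every prime p, L(p) ≡ 1 (mod p). -/
/-!
With `L n = φ ^ n + ψ ^ n`, pairing the terms `j` and `p - j` of the binomial expansion of
`(φ ^ n + ψ ^ n) ^ p` gives `L (p * n) = L n ^ p - S n`, where `S n` combines the values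
`L (n * (p - 2 * j))` with coefficients `p.choose j`, all divisible by `p`. Fermat's little theorem
then gives `p ∣ L (p * e) - L e`, and since `x ≡ y [ZMOD p ^ k]` implies
`x ^ p ≡ y ^ p [ZMOD p ^ (k + 1)]`, induction on `k` gives the congruences
`p ^ (k + 1) ∣ L (p ^ (k + 1) * e) - L (p ^ k * e)`. For `m = p ^ k * n` with `p ∤ n`, the Möbius
sum over the divisors of `m` collapses to `∑ t ∣ n, μ (n / t) * (L (p ^ k * t) - L (p ^ (k - 1) * t))`.
-/

open Finset ArithmeticFunction
open scoped ArithmeticFunction.Moebius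

theorem pow_succ_dvd_pow_sub_pow {R : Type*} [CommRing R] {p k : ℕ} {a b : R} (hk : k ≠ 0)
    (h : (p : R) ^ k ∣ a - b) : (p : R) ^ (k + 1) ∣ a ^ p - b ^ p := by
  rw [← geom_sum₂_mul, pow_succ']
  exact mul_dvd_mul (dvd_geom_sum₂_self ((dvd_pow_self _ hk).trans h)) h

theorem add_pow_two_mul_add_one {R : Type*} [CommSemiring R] (a b : R) (h : ℕ) :
    (a + b) ^ (2 * h + 1) = ∑ j ∈ range (h + 1), ((2 * h + 1).choose j : R) * (a * b) ^ j *
      (a ^ (2 * h + 1 - 2 * j) + b ^ (2 * h + 1 - 2 * j)) := by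
  rw [add_pow, show 2 * h + 1 + 1 = (h + 1) + (h + 1) by ring, sum_range_add,
    ← sum_range_reflect (fun j => a ^ (h + 1 + j) * _ * _), ← sum_add_distrib]
  refine sum_congr rfl fun j hj => ?_
  have hj : j ≤ h := Nat.lt_succ_iff.mp (mem_range.mp hj)
  rw [show h + 1 + (h + 1 - 1 - j) = 2 * h + 1 - j by omega, Nat.choose_symm (by omega),
    show 2 * h + 1 - (2 * h + 1 - j) = j by omega,
    show 2 * h + 1 - j = j + (2 * h + 1 - 2 * j) by omega, pow_add, pow_add, mul_pow]
  ring

theorem Nat.Coprime.sum_divisors_mul_eq_sum_sum {M : Type*} [AddCommMonoid M] {m n : ℕ}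
    (h : m.Coprime n) (f : ℕ → M) :
    ∑ d ∈ (m * n).divisors, f d = ∑ i ∈ m.divisors, ∑ j ∈ n.divisors, f (i * j) := by
  rw [h.divisors_mul, sum_map]
  exact (sum_attach (m.divisors ×ˢ n.divisors) fun x => f (x.1 * x.2)).trans (sum_product _ _ _)

theorem ArithmeticFunction.IsMultiplicative.sum_divisors_mul_apply_div {R : Type*}
    [CommSemiring R] {g : ArithmeticFunction R} (hg : g.IsMultiplicative) {m n : ℕ}
    (h : m.Coprime n) (f : ℕ → R) :
    ∑ d ∈ (m * n).divisors, g (m * n / d) * f d =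
      ∑ j ∈ n.divisors, g (n / j) * ∑ i ∈ m.divisors, g (m / i) * f (i * j) := by
  rw [h.sum_divisors_mul_eq_sum_sum, sum_comm]
  refine sum_congr rfl fun j hj => ?_
  rw [mul_sum]
  refine sum_congr rfl fun i hi => ?_
  have hi := Nat.dvd_of_mem_divisors hi
  have hj := Nat.dvd_of_mem_divisors hj
  rw [← Nat.div_mul_div_comm hi hj, hg.map_mul_of_coprime
    ((h.coprime_dvd_left (Nat.div_dvd_of_dvd hi)).coprime_dvd_right (Nat.div_dvd_of_dvd hj))]
  ring

theorem Nat.Prime.sum_divisors_pow_moebius_div_smul {M : Type*} [AddCommGroup M] {p : ℕ}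
    (hp : p.Prime) (k : ℕ) (f : ℕ → M) :
    ∑ i ∈ (p ^ (k + 1)).divisors, μ (p ^ (k + 1) / i) • f i = f (p ^ (k + 1)) - f (p ^ k) := by
  rw [Nat.sum_divisors_prime_pow hp, sum_range_succ, sum_range_succ, sum_eq_zero fun i hi => ?_]
  · rw [Nat.div_self (pow_pos hp.pos _), Nat.pow_div k.le_succ hp.pos,
      show k.succ - k = 1 by omega, pow_one, moebius_apply_prime hp]
    simp [neg_add_eq_sub]
  · have hi : i < k := mem_range.mp hi
    rw [Nat.pow_div (by omega) hp.pos, moebius_apply_prime_pow hp (by omega), if_neg (by omega)]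
    simp

def IsGaussCongruentAt (p : ℕ) (a : ℕ → ℤ) : Prop :=
  ∀ k e, (p : ℤ) ^ (k + 1) ∣ a (p ^ (k + 1) * e) - a (p ^ k * e)

namespace IsGaussCongruentAt

theorem of_apply_mul_eq {p : ℕ} (hp : p.Prime) {a S : ℕ → ℤ}
    (ha : ∀ n, a (p * n) = a n ^ p - S n) (hS₀ : ∀ n, (p : ℤ) ∣ S n)
    (hS : ∀ k, (∀ e, (p : ℤ) ^ (k + 1) ∣ a (p ^ (k + 1) * e) - a (p ^ k * e)) →
      ∀ e, (p : ℤ) ^ (k + 2) ∣ S (p ^ (k + 1) * e) - S (p ^ k * e)) :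
    IsGaussCongruentAt p a := by
  intro k
  induction k with
  | zero =>
    intro e
    simp only [zero_add, pow_one, pow_zero, one_mul]
    rw [ha, sub_right_comm]
    exact dvd_sub (Int.prime_dvd_pow_self_sub hp _) (hS₀ e)
  | succ k ih =>
    intro e
    have h := dvd_sub (pow_succ_dvd_pow_sub_pow k.succ_ne_zero (ih e)) (hS k ih e)
    rwa [← sub_sub_sub_comm, ← ha, ← ha, ← mul_assoc, ← mul_assoc, ← pow_succ', ← pow_succ'] at h

theorem pow_dvd_sum_moebius_mul {p : ℕ} (hp : p.Prime) {a : ℕ → ℤ} (ha : IsGaussCongruentAt p a)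
    (k : ℕ) {n : ℕ} (hn : ¬p ∣ n) :
    (p : ℤ) ^ k ∣ ∑ d ∈ (p ^ k * n).divisors, μ (p ^ k * n / d) * a d := by
  rcases k with _ | k
  · simp
  rw [isMultiplicative_moebius.sum_divisors_mul_apply_div
    (Nat.Coprime.pow_left _ (hp.coprime_iff_not_dvd.mpr hn))]
  refine dvd_sum fun j _ => dvd_mul_of_dvd_right ?_ _
  have h := hp.sum_divisors_pow_moebius_div_smul k fun i => a (i * j)
  simp only [smul_eq_mul] at h
  exact h ▸ ha k j

end IsGaussCongruentAt

theorem dvd_sum_moebius_mul_of_isGaussCongruentAt {a : ℕ → ℤ}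
    (ha : ∀ p, p.Prime → IsGaussCongruentAt p a) (m : ℕ) :
    (m : ℤ) ∣ ∑ d ∈ m.divisors, μ (m / d) * a d := by
  rcases Nat.eq_zero_or_pos m with rfl | hm
  · simp
  rw [Int.natCast_dvd, Nat.dvd_iff_prime_pow_dvd_dvd]
  intro p k hp hpk
  refine (pow_dvd_pow p ((hp.pow_dvd_iff_le_factorization hm.ne').mp hpk)).trans
    (Int.natCast_dvd.mp ?_)
  have h := (ha p hp).pow_dvd_sum_moebius_mul hp (m.factorization p) (Nat.not_dvd_ordCompl hp hm.ne')
  rwa [Nat.ordProj_mul_ordCompl_eq_self, ← Nat.cast_pow] at h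

def lucas : ℕ → ℤ
  | 0 => 2
  | 1 => 1
  | n + 2 => lucas (n + 1) + lucas n

namespace lucas

open Real goldenRatio

theorem cast_eq : ∀ n, (lucas n : ℝ) = φ ^ n + ψ ^ n
  | 0 => by norm_num [lucas]
  | 1 => by simp [lucas, goldenRatio_add_goldenConj]
  | n + 2 => by
    rw [lucas, Int.cast_add, cast_eq (n + 1), cast_eq n, pow_add φ n 2, pow_add ψ n 2,
      goldenRatio_sq, goldenConj_sq]
    ring

theorem two_mul (n : ℕ) : lucas (2 * n) = lucas n ^ 2 - 2 * (-1) ^ n := by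
  rify
  rw [cast_eq, cast_eq, mul_comm, pow_mul, pow_mul, ← goldenRatio_mul_goldenConj, mul_pow]
  ring

theorem pow_two_mul_add_one (h n : ℕ) : lucas n ^ (2 * h + 1) = ∑ j ∈ range (h + 1),
    ((2 * h + 1).choose j : ℤ) * (-1) ^ (n * j) * lucas (n * (2 * h + 1 - 2 * j)) := by
  rify
  simp only [cast_eq, pow_mul, add_pow_two_mul_add_one, ← mul_pow, goldenRatio_mul_goldenConj]

theorem isGaussCongruentAt_two : IsGaussCongruentAt 2 lucas := by
  refine .of_apply_mul_eq Nat.prime_two two_mul (fun _ => dvd_mul_right _ _) fun k _ e => ?_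
  rw [← mul_sub, pow_succ' _ (k + 1)]
  refine mul_dvd_mul_left _ ?_
  have heven : ∀ i, i ≠ 0 → Even (2 ^ i * e) := fun i hi =>
    (Nat.even_pow.mpr ⟨even_two, hi⟩).mul_right e
  rw [(heven _ k.succ_ne_zero).neg_one_pow]
  rcases k with _ | k
  · rcases neg_one_pow_eq_or ℤ e with h | h <;> simp [h]
  · rw [(heven _ k.succ_ne_zero).neg_one_pow, sub_self]
    exact dvd_zero _

theorem isGaussCongruentAt_of_odd {p : ℕ} (hp : p.Prime) (hodd : Odd p) :
    IsGaussCongruentAt p lucas := by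
  obtain ⟨h, rfl⟩ := hodd
  have hsign : ∀ i x, (-1 : ℤ) ^ ((2 * h + 1) ^ i * x) = (-1) ^ x := fun i x => by
    rw [pow_mul, (Odd.pow ⟨h, rfl⟩).neg_one_pow]
  have hchoose : ∀ j ∈ range h, ((2 * h + 1 : ℕ) : ℤ) ∣ ((2 * h + 1).choose (j + 1) : ℤ) :=
    fun j hj => Int.natCast_dvd_natCast.mpr
      (hp.dvd_choose_self j.succ_ne_zero (by rw [mem_range] at hj; omega))
  refine .of_apply_mul_eq hp
    (S := fun n => ∑ j ∈ range h, ((2 * h + 1).choose (j + 1) : ℤ) * (-1) ^ (n * (j + 1)) *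
      lucas (n * (2 * h + 1 - 2 * (j + 1)))) (fun n => ?_) (fun n => ?_) (fun k ih e => ?_)
  · rw [pow_two_mul_add_one, sum_range_succ']
    simp [mul_comm n]
  · exact dvd_sum fun j hj => dvd_mul_of_dvd_left (dvd_mul_of_dvd_left (hchoose j hj) _) _
  · rw [← sum_sub_distrib]
    refine dvd_sum fun j hj => ?_
    simp only [mul_assoc, hsign, ← mul_sub]
    rw [pow_succ' _ (k + 1)]
    exact mul_dvd_mul (hchoose j hj) (dvd_mul_of_dvd_right (ih _) _)

theorem isGaussCongruentAt {p : ℕ} (hp : p.Prime) : IsGaussCongruentAt p lucas := by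
  rcases hp.eq_two_or_odd' with rfl | hodd
  · exact isGaussCongruentAt_two
  · exact isGaussCongruentAt_of_odd hp hodd

theorem eq_of_rec {L : ℕ → ℤ} (h1 : L 1 = 1) (h2 : L 2 = 3)
    (hrec : ∀ m : ℕ, 3 ≤ m → L m = L (m - 1) + L (m - 2)) {n : ℕ} (hn : 1 ≤ n) : L n = lucas n := by
  have key : ∀ n, L (n + 1) = lucas (n + 1) ∧ L (n + 2) = lucas (n + 2) := fun n => by
    induction n with
    | zero => exact ⟨h1, h2⟩
    | succ n ih => exact ⟨ih.2, by
      rw [hrec (n + 3) (by omega), show n + 3 - 1 = n + 2 from rfl,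
        show n + 3 - 2 = n + 1 from rfl, ih.1, ih.2]; rfl⟩
  obtain ⟨n, rfl⟩ := Nat.exists_eq_add_of_le' hn
  exact (key n).1

end lucas

theorem stmt_6 (L : ℕ → ℤ) (h1 : L 1 = 1) (h2 : L 2 = 3)
    (hrec : ∀ m : ℕ, 3 ≤ m → L m = L (m - 1) + L (m - 2)) :
    (∀ m : ℕ, 1 ≤ m →
      (m : ℤ) ∣ ∑ d ∈ m.divisors, (ArithmeticFunction.moebius (m / d)) * L d) ∧
    (∀ p : ℕ, p.Prime → L p ≡ 1 [ZMOD p]) := by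
  have hL : ∀ n, 1 ≤ n → L n = lucas n := fun n hn => lucas.eq_of_rec h1 h2 hrec hn
  refine ⟨fun m _ => ?_, fun p hp => ?_⟩
  · rw [sum_congr rfl fun d hd => congrArg _ (hL d (Nat.pos_of_mem_divisors hd))]
    exact dvd_sum_moebius_mul_of_isGaussCongruentAt (fun p hp => lucas.isGaussCongruentAt hp) m
  · rw [hL p hp.one_lt.le]
    exact (Int.modEq_iff_dvd.mpr (by simpa [lucas] using lucas.isGaussCongruentAt hp 0 1)).symm
end

section
/- Fix n ≥ 3 and let fₙ : [1,n] → [1,n] be given by fₙ(x) = x + 1 for 1 ≤ x ≤ n−1 and fₙ(x) = −(n−1)x + n² − n + 1 for n−1 ≤ x ≤ n. Then for every 1 ≤ k ≤ n−1, the equation fₙ^k(x) = x has exactly 2^k − 1 solutions in [1, n]. -/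
/-!
Code a point `x` by its itinerary: the word in `Bool^k` recording whether `f^[t] x` lies on the
climbing branch `[1, n - 1]`, where `f x = x + 1`, or on the folding branch `[n - 1, n]`.
A fixed point of `f^[k]` cannot only climb, so its itinerary is not constantly `false`; and since
the integer orbit `n - 1 ↦ n ↦ 1 ↦ 2 ↦ ⋯` has period `n > k`, it never meets the common endpoint
`n - 1`, so the itinerary is well defined.
Along a given itinerary `f^[k]` is affine of slope `(-(n - 1)) ^ m`, `m ≥ 1` the number of folds,
hence has at most one fixed point. Conversely, composing inverse branches gives a continuous
section `φ` of `f^[k]` over `[1 + j, n]`, `j` the number of final climbs; because `k ≤ n - 1`, `φ`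
maps this interval into itself, and the intermediate value theorem yields a fixed point.
So the fixed points correspond bijectively to the `2 ^ k - 1` words other than the constant one.
-/

open Set Function

structure IsShiftFold (n : ℕ) (f : ℝ → ℝ) : Prop where
  shift : ∀ x : ℝ, 1 ≤ x → x ≤ n - 1 → f x = x + 1
  fold : ∀ x : ℝ, (n : ℝ) - 1 ≤ x → x ≤ n → f x = -((n : ℝ) - 1) * x + n ^ 2 - n + 1

def piece (n : ℕ) : Bool → Set ℝ
  | false => Icc 1 (n - 1)
  | true => Icc (n - 1) n

def numTrailingFalse (s : ℕ → Bool) : ℕ → ℕ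
  | 0 => 0
  | k + 1 => if s k then 0 else numTrailingFalse s k + 1

noncomputable def itinerary (n : ℕ) (f : ℝ → ℝ) (k : ℕ) (x : ℝ) : Fin k → Bool :=
  fun t => decide ((n : ℝ) - 1 < f^[t] x)

lemma numTrailingFalse_le (s : ℕ → Bool) (k : ℕ) : numTrailingFalse s k ≤ k := by
  induction k with
  | zero => rfl
  | succ k ih => unfold numTrailingFalse; split <;> omega

lemma add_numTrailingFalse_lt {s : ℕ → Bool} {i k : ℕ} (hi : s i = true) (hik : i < k) :
    i + numTrailingFalse s k < k := by
  induction k with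
  | zero => omega
  | succ k ih =>
    unfold numTrailingFalse
    split
    · omega
    · rcases Nat.lt_succ_iff_lt_or_eq.1 hik with h | rfl
      · have := ih h
        omega
      · contradiction

lemma piece_subset_Icc {n : ℕ} (hn : 2 ≤ n) (b : Bool) : piece n b ⊆ Icc 1 n := by
  have : (2 : ℝ) ≤ n := by exact_mod_cast hn
  cases b <;> exact Icc_subset_Icc (by linarith) (by linarith)

lemma mem_piece_decide {n : ℕ} {z : ℝ} (hz : z ∈ Icc 1 (n : ℝ)) :
    z ∈ piece n (decide ((n : ℝ) - 1 < z)) := by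
  by_cases h : (n : ℝ) - 1 < z
  · simp only [h, decide_true, piece]; exact ⟨h.le, hz.2⟩
  · simp only [h, decide_false, piece]; exact ⟨hz.1, not_lt.1 h⟩

lemma decide_eq_of_mem_piece {n : ℕ} {z : ℝ} {b : Bool} (hz : z ∈ piece n b)
    (hne : z ≠ n - 1) : decide ((n : ℝ) - 1 < z) = b := by
  cases b
  · simpa [piece] using hz.2
  · simpa [piece] using lt_of_le_of_ne hz.1 hne.symm

lemma neg_pow_ne_one {n m : ℕ} (hm : 1 ≤ m) (hmn : m ≤ n - 1) : (-((n : ℝ) - 1)) ^ m ≠ 1 := by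
  have hn : (2 : ℝ) ≤ n := by exact_mod_cast (by omega : 2 ≤ n)
  intro h
  have habs : ((n : ℝ) - 1) ^ m = 1 := by
    rw [← abs_of_nonneg (by linarith : (0 : ℝ) ≤ n - 1), ← abs_neg, ← abs_pow, h, abs_one]
  rw [pow_eq_one_iff_of_nonneg (by linarith) (by omega)] at habs
  have hn2 : n = 2 := by exact_mod_cast (by linarith : (n : ℝ) = 2)
  obtain rfl : m = 1 := by omega
  norm_num [hn2] at h

section
variable {n : ℕ} {f : ℝ → ℝ}

lemma iterate_eq_add (hshift : ∀ x : ℝ, 1 ≤ x → x ≤ n - 1 → f x = x + 1) {x : ℝ} (hx : 1 ≤ x)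
    {k : ℕ} (hk : ∀ t < k, f^[t] x ≤ n - 1) : f^[k] x = x + k := by
  induction k with
  | zero => simp
  | succ k ih =>
    have hxk := ih fun t ht => hk t (by omega)
    have hk0 : (0 : ℝ) ≤ k := k.cast_nonneg
    rw [iterate_succ_apply', hxk, hshift _ (by linarith) (hxk ▸ hk k k.lt_succ_self)]
    push_cast; ring

lemma iterate_eq_add_of_add_le (hshift : ∀ x : ℝ, 1 ≤ x → x ≤ n - 1 → f x = x + 1) {x : ℝ}
    (hx : 1 ≤ x) {k : ℕ} (hk : x + k ≤ n) : f^[k] x = x + k := by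
  induction k with
  | zero => simp
  | succ k ih =>
    have hk0 : (0 : ℝ) ≤ k := k.cast_nonneg
    push_cast at hk
    rw [iterate_succ_apply', ih (by linarith), hshift _ (by linarith) (by linarith)]
    push_cast; ring

namespace IsShiftFold

lemma mapsTo (hf : IsShiftFold n f) : MapsTo f (Icc 1 n) (Icc 1 n) := by
  intro x ⟨hx1, hxn⟩
  rcases le_total x (n - 1) with h | h
  · rw [hf.shift x hx1 h]; constructor <;> linarith
  · rw [hf.fold x h hxn]; constructor <;> nlinarith

lemma fold_inv_spec (hf : IsShiftFold n f) (hn : 2 ≤ n) {y : ℝ} (hy : y ∈ Icc 1 (n : ℝ)) :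
    (n ^ 2 - n + 1 - y) / (n - 1) ∈ piece n true ∧ f ((n ^ 2 - n + 1 - y) / (n - 1)) = y := by
  have hn' : (2 : ℝ) ≤ n := by exact_mod_cast hn
  obtain ⟨hy1, hyn⟩ := hy
  have hmem : (n ^ 2 - n + 1 - y) / (n - 1) ∈ Icc ((n : ℝ) - 1) n := by
    constructor
    · rw [le_div_iff₀ (by linarith)]; nlinarith
    · rw [div_le_iff₀ (by linarith)]; nlinarith
  refine ⟨hmem, ?_⟩
  rw [hf.fold _ hmem.1 hmem.2]
  field_simp [show (n : ℝ) - 1 ≠ 0 by linarith]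
  ring

lemma exists_inverseBranch_iterate (hf : IsShiftFold n f) (s : ℕ → Bool) {k : ℕ}
    (hk : k ≤ n - 1) :
    ∃ φ : ℝ → ℝ, Continuous φ ∧ ∀ y ∈ Icc (1 + numTrailingFalse s k : ℝ) n,
      f^[k] (φ y) = y ∧ ∀ t < k, f^[t] (φ y) ∈ piece n (s t) := by
  induction k with
  | zero => exact ⟨id, continuous_id, fun y _ => ⟨rfl, fun t ht => absurd ht t.not_lt_zero⟩⟩
  | succ k ih =>
    obtain ⟨φ, hφc, hφ⟩ := ih (by omega)
    have hj : (numTrailingFalse s k : ℝ) + 2 ≤ n := by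
      exact_mod_cast (by have := numTrailingFalse_le s k; omega : numTrailingFalse s k + 2 ≤ n)
    suffices ∃ ψ : ℝ → ℝ, Continuous ψ ∧ ∀ y ∈ Icc (1 + numTrailingFalse s (k + 1) : ℝ) n,
        ψ y ∈ Icc (1 + numTrailingFalse s k : ℝ) n ∧ ψ y ∈ piece n (s k) ∧ f (ψ y) = y by
      obtain ⟨ψ, hψc, hψ⟩ := this
      refine ⟨φ ∘ ψ, hφc.comp hψc, fun y hy => ?_⟩
      obtain ⟨hψj, hψs, hfψ⟩ := hψ y hy
      obtain ⟨hφk, hφs⟩ := hφ _ hψj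
      refine ⟨by rw [comp_apply, iterate_succ_apply', hφk, hfψ], fun t ht => ?_⟩
      rcases Nat.lt_succ_iff_lt_or_eq.1 ht with ht | rfl
      · exact hφs t ht
      · rwa [comp_apply, hφk]
    cases hsk : s k with
    | false =>
      refine ⟨fun y => y - 1, by fun_prop, fun y ⟨hy1, hyn⟩ => ?_⟩
      simp only [numTrailingFalse, hsk, Bool.false_eq_true, if_false, Nat.cast_add,
        Nat.cast_one] at hy1
      have hψ : y - 1 ∈ piece n false := ⟨by linarith, by linarith⟩
      exact ⟨⟨by linarith, by linarith⟩, hψ, by rw [hf.shift _ hψ.1 hψ.2]; ring⟩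
    | true =>
      refine ⟨fun y => (n ^ 2 - n + 1 - y) / (n - 1), by fun_prop, fun y ⟨hy1, hyn⟩ => ?_⟩
      simp only [numTrailingFalse, hsk, if_true, Nat.cast_zero] at hy1
      obtain ⟨hψ, hfψ⟩ := hf.fold_inv_spec (by omega) ⟨by linarith, hyn⟩
      exact ⟨⟨by linarith [hψ.1], hψ.2⟩, hψ, hfψ⟩

lemma iterate_sub_iterate (hf : IsShiftFold n f) {s : ℕ → Bool} {k : ℕ} {x y : ℝ}
    (hx : ∀ t < k, f^[t] x ∈ piece n (s t)) (hy : ∀ t < k, f^[t] y ∈ piece n (s t)) :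
    f^[k] x - f^[k] y =
      (-((n : ℝ) - 1)) ^ ((Finset.range k).filter (s · = true)).card * (x - y) := by
  induction k with
  | zero => simp
  | succ k ih =>
    have hxk := hx k k.lt_succ_self
    have hyk := hy k k.lt_succ_self
    rw [iterate_succ_apply', iterate_succ_apply', Finset.range_add_one, Finset.filter_insert]
    have ih' := ih (fun t ht => hx t (by omega)) (fun t ht => hy t (by omega))
    cases hsk : s k with
    | false =>
      rw [hsk] at hxk hyk
      rw [if_neg Bool.false_ne_true, hf.shift _ hxk.1 hxk.2, hf.shift _ hyk.1 hyk.2, ← ih']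
      ring
    | true =>
      rw [hsk] at hxk hyk
      rw [if_pos rfl, Finset.card_insert_of_notMem (by simp), pow_succ,
        hf.fold _ hxk.1 hxk.2, hf.fold _ hyk.1 hyk.2]
      linear_combination (-((n : ℝ) - 1)) * ih'

lemma eq_of_isFixedPt_of_itinerary (hf : IsShiftFold n f) {s : ℕ → Bool} {i k : ℕ}
    (hkn : k ≤ n - 1) (hik : i < k) (hi : s i = true) {x y : ℝ}
    (hx : IsFixedPt f^[k] x) (hy : IsFixedPt f^[k] y)
    (hxs : ∀ t < k, f^[t] x ∈ piece n (s t)) (hys : ∀ t < k, f^[t] y ∈ piece n (s t)) :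
    x = y := by
  have hslope := hf.iterate_sub_iterate hxs hys
  rw [hx.eq, hy.eq] at hslope
  have hR : 1 ≤ ((Finset.range k).filter (s · = true)).card :=
    Finset.card_pos.2 ⟨i, Finset.mem_filter.2 ⟨Finset.mem_range.2 hik, hi⟩⟩
  have hne := neg_pow_ne_one hR
    (((Finset.card_filter_le _ _).trans (Finset.card_range k).le).trans hkn)
  have : ((-((n : ℝ) - 1)) ^ ((Finset.range k).filter (s · = true)).card - 1) * (x - y) = 0 := by
    linear_combination -hslope
  exact sub_eq_zero.1 ((mul_eq_zero.1 this).resolve_left (sub_ne_zero.2 hne))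

lemma exists_isFixedPt_of_itinerary (hf : IsShiftFold n f) (s : ℕ → Bool) {i k : ℕ}
    (hkn : k ≤ n - 1) (hik : i < k) (hi : s i = true) :
    ∃ x ∈ Icc 1 (n : ℝ), IsFixedPt f^[k] x ∧ ∀ t < k, f^[t] x ∈ piece n (s t) := by
  obtain ⟨φ, hφc, hφ⟩ := hf.exists_inverseBranch_iterate s hkn
  set j := numTrailingFalse s k
  have hex : ∃ i, s i = true := ⟨i, hi⟩
  have hi₀ : Nat.find hex < k := (Nat.find_min' hex hi).trans_lt hik
  have hjn : (1 + j : ℝ) ≤ n := by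
    exact_mod_cast (by have := numTrailingFalse_le s k; omega : 1 + j ≤ n)
  have hφIcc : ∀ y ∈ Icc (1 + j : ℝ) n, φ y ∈ Icc 1 (n : ℝ) := fun y hy =>
    piece_subset_Icc (by omega) _ ((hφ y hy).2 0 (by omega))
  -- up to its first fold the orbit of `φ y` climbs by `1`, and that fold comes before time `k - j`
  have hφj : ∀ y ∈ Icc (1 + j : ℝ) n, 1 + j ≤ φ y := by
    intro y hy
    have hit := (hφ y hy).2
    have hclimb := iterate_eq_add hf.shift (hφIcc y hy).1 (k := Nat.find hex) fun t ht => by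
      have := hit t (ht.trans hi₀)
      rw [Bool.eq_false_iff.2 (Nat.find_min hex ht)] at this
      exact this.2
    have hR : (n : ℝ) - 1 ≤ f^[Nat.find hex] (φ y) := by
      have := hit _ hi₀
      rw [Nat.find_spec hex] at this
      exact this.1
    have : Nat.find hex + j + 2 ≤ n := by
      have := add_numTrailingFalse_lt (Nat.find_spec hex) hi₀; omega
    have : (Nat.find hex + j + 2 : ℝ) ≤ n := by exact_mod_cast this
    linarith
  obtain ⟨y, hy, hφy⟩ := intermediate_value_Icc' hjn (hφc.sub continuous_id).continuousOn
    ⟨sub_nonpos.2 (hφIcc n ⟨hjn, le_rfl⟩).2, sub_nonneg.2 (hφj _ ⟨le_rfl, hjn⟩)⟩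
  have hφy : φ y = y := sub_eq_zero.1 hφy
  obtain ⟨hfix, hit⟩ := hφ y hy
  exact ⟨y, hφy ▸ hφIcc y hy, by rwa [hφy] at hfix, by rwa [hφy] at hit⟩

lemma iterate_ne_of_isPeriodicPt (hf : IsShiftFold n f) {k : ℕ} (hk : 1 ≤ k) (hkn : k ≤ n - 1)
    {x : ℝ} (hx : IsPeriodicPt f k x) (t : ℕ) : f^[t] x ≠ n - 1 := by
  have hn : (2 : ℝ) ≤ n := by exact_mod_cast (by omega : 2 ≤ n)
  intro h
  have hp : f^[k] (n - 1) = n - 1 := h ▸ (hx.apply_iterate t).eq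
  have hf₁ : f (n - 1) = n := by rw [hf.shift _ (by linarith) le_rfl]; ring
  have hf₂ : f n = 1 := by rw [hf.fold _ (by linarith) le_rfl]; ring
  -- the orbit of `n - 1` is `n - 1, n, 1, 2, …, n - 2`, of exact period `n`
  obtain ⟨m, rfl⟩ : ∃ m, k = m + 1 := ⟨k - 1, by omega⟩
  cases m with
  | zero =>
    rw [iterate_one, hf₁] at hp
    linarith
  | succ m =>
    rw [iterate_add_apply, iterate_succ_apply, iterate_one, hf₁, hf₂,
      iterate_eq_add_of_add_le hf.shift le_rfl] at hp
    · have : (m : ℝ) + 2 = n := by linarith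
      have : m + 2 = n := by exact_mod_cast this
      omega
    · have : (m : ℝ) + 3 ≤ n := by exact_mod_cast (by omega : m + 3 ≤ n)
      linarith

lemma iterate_mem_piece_itinerary (hf : IsShiftFold n f) {k : ℕ} {x : ℝ}
    (hx : x ∈ Icc 1 (n : ℝ)) (t : Fin k) : f^[t] x ∈ piece n (itinerary n f k x t) :=
  mem_piece_decide (hf.mapsTo.iterate t hx)

lemma mapsTo_itinerary (hf : IsShiftFold n f) {k : ℕ} (hk : 1 ≤ k) :
    MapsTo (itinerary n f k) (Icc 1 n ∩ fixedPoints f^[k]) {fun _ => false}ᶜ := by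
  intro x ⟨hx, hfix⟩ hfalse
  have hclimb := iterate_eq_add hf.shift hx.1 (k := k) fun t ht => by
    simpa [itinerary] using congrFun hfalse ⟨t, ht⟩
  have : (1 : ℝ) ≤ k := by exact_mod_cast hk
  linarith [hfix.eq]

lemma injOn_itinerary (hf : IsShiftFold n f) {k : ℕ} (hk : 1 ≤ k) (hkn : k ≤ n - 1) :
    InjOn (itinerary n f k) (Icc 1 n ∩ fixedPoints f^[k]) := by
  intro x hx y hy hxy
  obtain ⟨i, hi⟩ : ∃ i, itinerary n f k x i = true := by
    by_contra! h
    exact hf.mapsTo_itinerary hk hx (funext fun i => by simpa using h i)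
  let s : ℕ → Bool := fun t => decide ((n : ℝ) - 1 < f^[t] x)
  refine hf.eq_of_isFixedPt_of_itinerary (s := s) hkn i.2 hi hx.2 hy.2
    (fun t _ => mem_piece_decide (hf.mapsTo.iterate t hx.1)) fun t ht => ?_
  have : s t = itinerary n f k y ⟨t, ht⟩ := congrFun hxy ⟨t, ht⟩
  exact this ▸ hf.iterate_mem_piece_itinerary hy.1 ⟨t, ht⟩

lemma surjOn_itinerary (hf : IsShiftFold n f) {k : ℕ} (hk : 1 ≤ k) (hkn : k ≤ n - 1) :
    SurjOn (itinerary n f k) (Icc 1 n ∩ fixedPoints f^[k]) {fun _ => false}ᶜ := by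
  intro σ hσ
  obtain ⟨i, hi⟩ : ∃ i, σ i = true := by
    by_contra! h
    exact hσ (funext fun i => by simpa using h i)
  let s : ℕ → Bool := fun t => if h : t < k then σ ⟨t, h⟩ else false
  obtain ⟨x, hx, hfix, hxs⟩ :=
    hf.exists_isFixedPt_of_itinerary s hkn i.2 (by simpa [s] using hi)
  refine ⟨x, ⟨hx, hfix⟩, funext fun t => ?_⟩
  have := decide_eq_of_mem_piece (hxs t t.2) (hf.iterate_ne_of_isPeriodicPt hk hkn hfix t)
  simpa [s, itinerary] using this

end IsShiftFold
end

theorem stmt_8_general (n : ℕ) (f : ℝ → ℝ)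
    (h1 : ∀ x : ℝ, 1 ≤ x → x ≤ n - 1 → f x = x + 1)
    (h2 : ∀ x : ℝ, (n : ℝ) - 1 ≤ x → x ≤ n →
      f x = -((n : ℝ) - 1) * x + n ^ 2 - n + 1) :
    ∀ k : ℕ, 1 ≤ k → k ≤ n - 1 →
      {x : ℝ | x ∈ Set.Icc 1 (n : ℝ) ∧ f^[k] x = x}.ncard = 2 ^ k - 1 := by
  intro k hk hkn
  have hf : IsShiftFold n f := ⟨h1, h2⟩
  have hbij : BijOn (itinerary n f k) (Icc 1 n ∩ fixedPoints f^[k]) {fun _ => false}ᶜ :=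
    ⟨hf.mapsTo_itinerary hk, hf.injOn_itinerary hk hkn, hf.surjOn_itinerary hk hkn⟩
  change (Icc 1 (n : ℝ) ∩ fixedPoints f^[k]).ncard = _
  rw [hbij.ncard_eq, ncard_compl, ncard_singleton, Nat.card_fun]
  simp

theorem stmt_8 (n : ℕ) (hn : 3 ≤ n) (f : ℝ → ℝ)
    (h1 : ∀ x : ℝ, 1 ≤ x → x ≤ n - 1 → f x = x + 1)
    (h2 : ∀ x : ℝ, (n : ℝ) - 1 ≤ x → x ≤ n →
      f x = -((n : ℝ) - 1) * x + n ^ 2 - n + 1) :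
    ∀ k : ℕ, 1 ≤ k → k ≤ n - 1 →
      {x : ℝ | x ∈ Set.Icc 1 (n : ℝ) ∧ f^[k] x = x}.ncard = 2 ^ k - 1 :=
  stmt_8_general n f h1 h2
end

section
/- Fix n ≥ 3 and define φₙ(m) = 2^m − 1 for 1 ≤ m ≤ n−1 and φₙ(m) = ∑_{j=1}^{n-1} φₙ(m−j) for m ≥ n. Then lim_{m→∞} (log ∑_{d|m} μ(m/d) φₙ(d))/m = log αₙ, where αₙ is the unique positive root of x^{n-1} − ∑_{k=0}^{n-2} x^k and μ is the Möbius function. -/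
/-!
By the recurrence, `φₙ(m)` is squeezed between two constant multiples of `αₙ ^ m`: the
sequence `αₙ ^ m` satisfies the same recurrence, and a comparison principle for recurrences
with nonnegative coefficients propagates the bounds from the initial values. In the Möbius sum
the term `d = m` is `φₙ(m)`, while every proper divisor satisfies `d ≤ m / 2`, so the remaining
terms contribute `O(m · √αₙ ^ m) = o(αₙ ^ m)`. Hence the Möbius sum is also of exact order
`αₙ ^ m`, and its logarithm is `m log αₙ + O(1)`.
-/

open Filter Finset Topology ArithmeticFunction
open scoped ArithmeticFunction.Moebius

theorem one_lt_of_pow_eq_sum_range {α : ℝ} {k : ℕ} (hα : 0 ≤ α) (hk : 2 ≤ k)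
    (hroot : α ^ k = ∑ i ∈ range k, α ^ i) : 1 < α := by
  by_contra! h
  have hsum : 1 + α ≤ ∑ i ∈ range k, α ^ i :=
    calc 1 + α = ∑ i ∈ range 2, α ^ i := by simp [sum_range_succ]
      _ ≤ ∑ i ∈ range k, α ^ i :=
        sum_le_sum_of_subset_of_nonneg (range_subset_range.mpr hk) fun i _ _ => by positivity
  linarith [pow_le_of_le_one hα h (n := k) (by omega)]

theorem sum_Icc_pow_sub_eq_pow {α : ℝ} {k m : ℕ} (hroot : α ^ k = ∑ i ∈ range k, α ^ i)
    (hkm : k ≤ m) : ∑ j ∈ Icc 1 k, α ^ (m - j) = α ^ m :=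
  calc ∑ j ∈ Icc 1 k, α ^ (m - j) = α ^ (m - k) * ∑ j ∈ Icc 1 k, α ^ (k - j) := by
        rw [mul_sum]
        refine sum_congr rfl fun j hj => ?_
        rw [mem_Icc] at hj
        rw [← pow_add]
        congr 1
        omega
    _ = α ^ (m - k) * ∑ i ∈ range k, α ^ i := by
        congr 1
        refine sum_nbij' (fun j => k - j) (fun i => k - i) ?_ ?_ ?_ ?_ ?_ <;>
          intro a ha <;> simp only [mem_Icc, mem_range] at * <;> omega
    _ = α ^ m := by rw [← hroot, ← pow_add, Nat.sub_add_cancel hkm]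

theorem le_of_sum_Icc_recurrence {k : ℕ} {u v : ℕ → ℝ}
    (hu : ∀ m, k < m → u m ≤ ∑ j ∈ Icc 1 k, u (m - j))
    (hv : ∀ m, k < m → ∑ j ∈ Icc 1 k, v (m - j) ≤ v m)
    (hinit : ∀ m, 1 ≤ m → m ≤ k → u m ≤ v m) {m : ℕ} (hm : 1 ≤ m) : u m ≤ v m := by
  induction m using Nat.strong_induction_on with
  | _ m ih =>
    rcases le_or_gt m k with hmk | hkm
    · exact hinit m hm hmk
    · calc u m ≤ ∑ j ∈ Icc 1 k, u (m - j) := hu m hkm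
        _ ≤ ∑ j ∈ Icc 1 k, v (m - j) := sum_le_sum fun j hj => by
            rw [mem_Icc] at hj
            exact ih _ (by omega) (by omega)
        _ ≤ v m := hv m hkm

theorem pow_bounds_of_sum_Icc_recurrence {k : ℕ} {α c C : ℝ} {u : ℕ → ℝ}
    (hroot : α ^ k = ∑ i ∈ range k, α ^ i)
    (hu : ∀ m, k < m → u m = ∑ j ∈ Icc 1 k, u (m - j))
    (hinit : ∀ m, 1 ≤ m → m ≤ k → c * α ^ m ≤ u m ∧ u m ≤ C * α ^ m)
    {m : ℕ} (hm : 1 ≤ m) : c * α ^ m ≤ u m ∧ u m ≤ C * α ^ m := by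
  have hgeom (c : ℝ) (m : ℕ) (hm : k < m) : c * α ^ m = ∑ j ∈ Icc 1 k, c * α ^ (m - j) := by
    rw [← mul_sum, sum_Icc_pow_sub_eq_pow hroot hm.le]
  exact ⟨le_of_sum_Icc_recurrence (fun m hm => (hgeom c m hm).le) (fun m hm => (hu m hm).ge)
      (fun m hm hmk => (hinit m hm hmk).1) hm,
    le_of_sum_Icc_recurrence (fun m hm => (hu m hm).le) (fun m hm => (hgeom C m hm).ge)
      (fun m hm hmk => (hinit m hm hmk).2) hm⟩

theorem two_pow_sub_one_bounds {α : ℝ} (hα : 1 ≤ α) {k m : ℕ} (hm : 1 ≤ m) (hmk : m ≤ k) :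
    (α ^ k)⁻¹ * α ^ m ≤ 2 ^ m - 1 ∧ (2 : ℝ) ^ m - 1 ≤ 2 ^ k * α ^ m := by
  have h2m : (2 : ℝ) ≤ 2 ^ m := le_self_pow₀ one_le_two (by omega)
  constructor
  · rw [inv_mul_le_iff₀ (by positivity)]
    have : α ^ m ≤ α ^ k := pow_le_pow_right₀ hα hmk
    nlinarith [one_le_pow₀ (n := k) hα]
  · have : (2 : ℝ) ^ m ≤ 2 ^ k := pow_le_pow_right₀ one_le_two hmk
    nlinarith [one_le_pow₀ (n := m) hα]

theorem abs_sum_divisors_moebius_mul_sub_le {f : ℕ → ℝ} {α C : ℝ} (hα : 1 ≤ α)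
    (hf : ∀ d, 1 ≤ d → |f d| ≤ C * α ^ d) {m : ℕ} (hm : m ≠ 0) :
    |∑ d ∈ m.divisors, (μ (m / d) : ℝ) * f d - f m| ≤ C * m * √α ^ m := by
  have hC : 0 ≤ C := nonneg_of_mul_nonneg_left ((abs_nonneg _).trans (hf 1 le_rfl))
    (by positivity)
  have hsqrt : 1 ≤ √α := Real.one_le_sqrt.mpr hα
  rw [← Nat.cons_self_properDivisors hm, sum_cons, Nat.div_self (Nat.pos_of_ne_zero hm),
    moebius_apply_one, Int.cast_one, one_mul, add_sub_cancel_left]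
  have hterm (d : ℕ) (hd : d ∈ m.properDivisors) : |(μ (m / d) : ℝ) * f d| ≤ C * √α ^ m := by
    have hd0 := Nat.pos_of_mem_properDivisors hd
    have h2d : 2 * d ≤ m :=
      (Nat.le_div_iff_mul_le hd0).1 (Nat.one_lt_div_of_mem_properDivisors hd)
    calc |(μ (m / d) : ℝ) * f d| = |(μ (m / d) : ℝ)| * |f d| := abs_mul _ _
      _ ≤ 1 * (C * α ^ d) := by
        refine mul_le_mul ?_ (hf d hd0) (abs_nonneg _) zero_le_one
        rw [← Int.cast_abs]
        exact_mod_cast abs_moebius_le_one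
      _ = C * √α ^ (2 * d) := by rw [one_mul, pow_mul, Real.sq_sqrt (by linarith)]
      _ ≤ C * √α ^ m := by gcongr
  have hcard : (#m.properDivisors : ℝ) ≤ m := by
    exact_mod_cast (card_filter_le _ _).trans (by simp)
  calc |∑ d ∈ m.properDivisors, (μ (m / d) : ℝ) * f d|
      ≤ ∑ d ∈ m.properDivisors, |(μ (m / d) : ℝ) * f d| := abs_sum_le_sum_abs _ _
    _ ≤ ∑ _d ∈ m.properDivisors, C * √α ^ m := sum_le_sum hterm
    _ = #m.properDivisors * (C * √α ^ m) := by rw [sum_const, nsmul_eq_mul]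
    _ ≤ m * (C * √α ^ m) := by gcongr
    _ = C * m * √α ^ m := by ring

theorem eventually_mul_sqrt_pow_le {α ε : ℝ} (hα : 1 < α) (hε : 0 < ε) :
    ∀ᶠ m : ℕ in atTop, m * √α ^ m ≤ ε * α ^ m := by
  have hsqrt : 1 < √α := (Real.lt_sqrt zero_le_one).2 (by simpa using hα)
  have hlim := tendsto_self_mul_const_pow_of_lt_one (by positivity) (inv_lt_one_of_one_lt₀ hsqrt)
  filter_upwards [hlim.eventually (ge_mem_nhds hε)] with m hm
  rw [inv_pow, ← div_eq_mul_inv, div_le_iff₀ (by positivity)] at hm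
  calc (m : ℝ) * √α ^ m ≤ ε * √α ^ m * √α ^ m := by gcongr
    _ = ε * α ^ m := by rw [mul_assoc, ← mul_pow, Real.mul_self_sqrt (by linarith)]

theorem eventually_pow_bounds_of_abs_sub_le {f g : ℕ → ℝ} {α c C : ℝ} (hα : 1 < α) (hc : 0 < c)
    (hC : 0 < C) (hf : ∀ᶠ m in atTop, c * α ^ m ≤ f m ∧ f m ≤ C * α ^ m)
    (hfg : ∀ᶠ m : ℕ in atTop, |g m - f m| ≤ C * m * √α ^ m) :
    ∀ᶠ m in atTop, c / 2 * α ^ m ≤ g m ∧ g m ≤ (C + c / 2) * α ^ m := by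
  filter_upwards [hf, hfg, eventually_mul_sqrt_pow_le hα (ε := c / (2 * C)) (by positivity)]
    with m ⟨hlo, hhi⟩ hgf hsmall
  have herr : C * m * √α ^ m ≤ c / 2 * α ^ m :=
    calc C * m * √α ^ m = C * (m * √α ^ m) := mul_assoc _ _ _
      _ ≤ C * (c / (2 * C) * α ^ m) := by gcongr
      _ = c / 2 * α ^ m := by field_simp
  have := abs_le.mp hgf
  constructor <;> linarith

theorem tendsto_log_div_of_eventually_bounds {x : ℕ → ℝ} {a b β : ℝ} (ha : 0 < a) (hb : 0 < b)
    (hβ : 0 < β) (h : ∀ᶠ m in atTop, a * β ^ m ≤ x m ∧ x m ≤ b * β ^ m) :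
    Tendsto (fun m : ℕ => Real.log (x m) / m) atTop (𝓝 (Real.log β)) := by
  have hlim (c : ℝ) : Tendsto (fun m : ℕ => Real.log c / m + Real.log β) atTop
      (𝓝 (Real.log β)) := by
    simpa using (tendsto_const_div_atTop_nhds_zero_nat (Real.log c)).add_const (Real.log β)
  have hsqueeze : ∀ᶠ m : ℕ in atTop, Real.log a / m + Real.log β ≤ Real.log (x m) / m ∧
      Real.log (x m) / m ≤ Real.log b / m + Real.log β := by
    filter_upwards [h, eventually_gt_atTop 0] with m ⟨hlo, hhi⟩ hm
    have hlog (c : ℝ) (hc : 0 < c) : Real.log c / m + Real.log β = Real.log (c * β ^ m) / m := by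
      rw [Real.log_mul hc.ne' (by positivity), Real.log_pow]
      field_simp
    rw [hlog a ha, hlog b hb]
    have hx : 0 < x m := lt_of_lt_of_le (by positivity) hlo
    exact ⟨by gcongr, by gcongr⟩
  exact tendsto_of_tendsto_of_tendsto_of_le_of_le' (hlim a) (hlim b)
    (hsqueeze.mono fun _ h => h.1) (hsqueeze.mono fun _ h => h.2)

theorem stmt_13 (n : ℕ) (hn : 3 ≤ n) (φ : ℕ → ℤ)
    (hinit : ∀ m : ℕ, 1 ≤ m → m ≤ n - 1 → φ m = 2 ^ m - 1)
    (hrec : ∀ m : ℕ, n ≤ m → φ m = ∑ j ∈ Finset.Icc 1 (n - 1), φ (m - j))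
    (α : ℝ) (hα : 0 < α)
    (hαroot : α ^ (n - 1) - ∑ k ∈ Finset.range (n - 1), α ^ k = 0) :
    Filter.Tendsto
      (fun m : ℕ => Real.log
        ((∑ d ∈ m.divisors, (ArithmeticFunction.moebius (m / d)) * φ d : ℤ)) / m)
      Filter.atTop (nhds (Real.log α)) := by
  have hroot : α ^ (n - 1) = ∑ k ∈ range (n - 1), α ^ k := sub_eq_zero.mp hαroot
  have hα1 : 1 < α := one_lt_of_pow_eq_sum_range hα.le (by omega) hroot
  set c := (α ^ (n - 1))⁻¹
  set C := (2 : ℝ) ^ (n - 1)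
  have hbounds (m : ℕ) (hm : 1 ≤ m) : c * α ^ m ≤ φ m ∧ (φ m : ℝ) ≤ C * α ^ m := by
    refine pow_bounds_of_sum_Icc_recurrence (u := fun m => (φ m : ℝ)) hroot (fun m hm => ?_)
      (fun m hm hmk => ?_) hm
    · rw [hrec m (by omega)]
      push_cast
      rfl
    · rw [hinit m hm hmk]
      push_cast
      exact two_pow_sub_one_bounds hα1.le hm hmk
  have hφ_le (d : ℕ) (hd : 1 ≤ d) : |(φ d : ℝ)| ≤ C * α ^ d :=
    (abs_of_nonneg ((by positivity : (0 : ℝ) ≤ c * α ^ d).trans (hbounds d hd).1)).trans_le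
      (hbounds d hd).2
  refine tendsto_log_div_of_eventually_bounds (by positivity) (by positivity) hα
    (eventually_pow_bounds_of_abs_sub_le (f := fun m => (φ m : ℝ)) (c := c) (C := C) hα1
      (by positivity) (by positivity) ?_ ?_)
  · filter_upwards [eventually_ge_atTop 1] with m hm using hbounds m hm
  · filter_upwards [eventually_gt_atTop 0] with m hm
    push_cast
    exact abs_sum_divisors_moebius_mul_sub_le hα1.le hφ_le hm.ne'
end

section
/- Let t = 2k+1 > 1 be an odd integer and let g(x) = b·x·∏_{j=1}^{k}(x² − j²) for a sufficiently large positive constant b. Then g is an odd polynomial function from ℝ to ℝ, and on each of the intervals determined by consecutive points of {−k, …, −1, 0, 1, …, k}, extended suitably, the equation g(x) = −x has solutions; in fact for every positive integer m the equation g^m(x) = −x has exactly t^m distinct real solutions. -/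
/-!
Call `[u, v] ⊆ [-c, c]` a lap of `h` when `h u` and `h v` lie outside `[-c, c]`, on opposite
sides; then `h x + x` changes sign on `[u, v]`, so `h x = -x` has a root inside. With `c = k + 1`
and `b` large, `g` has `2k + 1` pairwise disjoint laps, the intervals between consecutive
half-integers of `[-k - 1/2, k + 1/2]`. On a lap of `f` the function `f` sweeps across
`[-c, c]`, so every lap `J` of `g` pulls back to a sublap of `g ∘ f` that `f` maps into the
interior of `J`; hence `g^[m]` has `(2k + 1)^m` pairwise disjoint laps. Conversely the solutions
are roots of the polynomial `g^[m](X) + X` of degree at most `(2k + 1)^m`, which is nonzero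
because the ends of laps are not solutions.
-/

open Set Function Finset Polynomial

theorem exists_first_hit {f : ℝ → ℝ} {u v q : ℝ} (huv : u ≤ v)
    (hf : ContinuousOn f (Set.Icc u v)) (hu : f u < q) (hv : q ≤ f v) :
    ∃ v' ∈ Ioc u v, f v' = q ∧ ∀ x ∈ Ico u v', f x < q := by
  set T := Set.Icc u v ∩ f ⁻¹' Ici q
  have hT : IsClosed T := hf.preimage_isClosed_of_isClosed isClosed_Icc isClosed_Ici
  have hbdd : BddBelow T := ⟨u, fun x hx => hx.1.1⟩
  have hmem : sInf T ∈ T := hT.csInf_mem ⟨v, ⟨huv, le_rfl⟩, hv⟩ hbdd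
  have hbelow : ∀ x ∈ Ico u (sInf T), f x < q := fun x hx =>
    not_le.1 fun h => (csInf_le hbdd ⟨⟨hx.1, hx.2.le.trans hmem.1.2⟩, h⟩).not_gt hx.2
  have hlt : u < sInf T := hmem.1.1.lt_of_ne fun h => (h ▸ hmem.2 : q ≤ f u).not_gt hu
  refine ⟨sInf T, ⟨hlt, hmem.1.2⟩, le_antisymm (not_lt.1 fun h => ?_) hmem.2, hbelow⟩
  obtain ⟨x, hx, hfx⟩ := intermediate_value_Ico hlt.le (hf.mono (Icc_subset_Icc_right hmem.1.2))
    ⟨hu.le, h⟩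
  exact (hbelow x hx).ne hfx

theorem exists_last_hit {f : ℝ → ℝ} {u v p : ℝ} (huv : u ≤ v)
    (hf : ContinuousOn f (Set.Icc u v)) (hu : f u ≤ p) (hv : p < f v) :
    ∃ u' ∈ Ico u v, f u' = p ∧ ∀ x ∈ Ioc u' v, p < f x := by
  have hf' : ContinuousOn (fun x => -f (-x)) (Set.Icc (-v) (-u)) :=
    (hf.comp continuousOn_neg fun x hx => ⟨le_neg.1 hx.2, neg_le.1 hx.1⟩).neg
  obtain ⟨w, hw, hfw, hbelow⟩ :=
    exists_first_hit (q := -p) (neg_le_neg huv) hf' (by simpa using hv) (by simpa using hu)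
  refine ⟨-w, ⟨le_neg.2 hw.2, neg_lt.1 hw.1⟩, by simpa using hfw, fun x hx => ?_⟩
  simpa using hbelow (-x) ⟨neg_le_neg hx.2, neg_lt.1 hx.1⟩

theorem exists_Ioo_mapsTo_Ioo {f : ℝ → ℝ} {u v p q : ℝ} (huv : u ≤ v)
    (hf : ContinuousOn f (Set.Icc u v)) (hu : f u ≤ p) (hpq : p < q) (hv : q ≤ f v) :
    ∃ u' v', u ≤ u' ∧ u' < v' ∧ v' ≤ v ∧ f u' = p ∧ f v' = q ∧
      MapsTo f (Ioo u' v') (Ioo p q) := by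
  obtain ⟨v', hv', hfv', hbelow⟩ := exists_first_hit huv hf (hu.trans_lt hpq) hv
  obtain ⟨u', hu', hfu', habove⟩ := exists_last_hit hv'.1.le
    (hf.mono (Icc_subset_Icc_right hv'.2)) hu (hfv' ▸ hpq)
  exact ⟨u', v', hu'.1, hu'.2, hv'.2, hfu', hfv', fun x hx =>
    ⟨habove x ⟨hx.1, hx.2.le⟩, hbelow x ⟨hu'.1.trans hx.1.le, hx.2⟩⟩⟩

theorem exists_Ioo_mapsTo_Ioo' {f : ℝ → ℝ} {u v p q : ℝ} (huv : u ≤ v)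
    (hf : ContinuousOn f (Set.Icc u v)) (hu : q ≤ f u) (hpq : p < q) (hv : f v ≤ p) :
    ∃ u' v', u ≤ u' ∧ u' < v' ∧ v' ≤ v ∧ f u' = q ∧ f v' = p ∧
      MapsTo f (Ioo u' v') (Ioo p q) := by
  obtain ⟨u', v', hu, huv', hv, hfu, hfv, hmaps⟩ :=
    exists_Ioo_mapsTo_Ioo huv hf.neg (neg_le_neg hu) (neg_lt_neg hpq) (neg_le_neg hv)
  refine ⟨u', v', hu, huv', hv, neg_inj.1 hfu, neg_inj.1 hfv, fun x hx => ?_⟩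
  obtain ⟨h1, h2⟩ := hmaps hx
  exact ⟨lt_of_neg_lt_neg h2, lt_of_neg_lt_neg h1⟩

def OnOppositeSides (c a b : ℝ) : Prop := a < -c ∧ c < b ∨ c < a ∧ b < -c

theorem OnOppositeSides.symm {a b c : ℝ} (h : OnOppositeSides c a b) : OnOppositeSides c b a :=
  Or.symm h |>.imp And.symm And.symm

theorem onOppositeSides_of_mul_neg {a b c : ℝ} (ha : c < |a|) (hb : c < |b|) (hab : a * b < 0) :
    OnOppositeSides c a b := by
  rcases mul_neg_iff.1 hab with ⟨ha0, hb0⟩ | ⟨ha0, hb0⟩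
  · rw [abs_of_pos ha0] at ha
    rw [abs_of_neg hb0] at hb
    exact Or.inr ⟨ha, by linarith⟩
  · rw [abs_of_neg ha0] at ha
    rw [abs_of_pos hb0] at hb
    exact Or.inl ⟨by linarith, hb⟩

structure IsLap (h : ℝ → ℝ) (c : ℝ) (I : ℝ × ℝ) : Prop where
  neg_le_fst : -c ≤ I.1
  fst_lt_snd : I.1 < I.2
  snd_le : I.2 ≤ c
  onOppositeSides : OnOppositeSides c (h I.1) (h I.2)

namespace IsLap

variable {f g h : ℝ → ℝ} {c : ℝ} {I J : ℝ × ℝ}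

theorem apply_fst_ne_neg (hI : IsLap h c I) : h I.1 ≠ -I.1 := by
  have := hI.fst_lt_snd.trans_le hI.snd_le
  rcases hI.onOppositeSides with ⟨h1, -⟩ | ⟨h1, -⟩ <;> intro h2 <;> linarith [hI.neg_le_fst]

theorem exists_root (hI : IsLap h c I) (hh : ContinuousOn h (Set.Icc I.1 I.2)) :
    ∃ x ∈ Ioo I.1 I.2, h x = -x := by
  have hF : ContinuousOn (fun x => h x + x) (Set.Icc I.1 I.2) := hh.add continuousOn_id
  have h1 := hI.neg_le_fst
  have h2 := hI.snd_le
  have h12 := hI.fst_lt_snd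
  obtain ⟨x, hx, hFx⟩ : (0 : ℝ) ∈ (fun x => h x + x) '' Ioo I.1 I.2 := by
    rcases hI.onOppositeSides with ⟨hl, hr⟩ | ⟨hl, hr⟩
    · exact intermediate_value_Ioo h12.le hF ⟨by linarith, by linarith⟩
    · exact intermediate_value_Ioo' h12.le hF ⟨by linarith, by linarith⟩
  exact ⟨x, hx, eq_neg_of_add_eq_zero_left hFx⟩

theorem exists_comp (hI : IsLap f c I) (hJ : IsLap g c J)
    (hf : ContinuousOn f (Set.Icc I.1 I.2)) :
    ∃ K, IsLap (g ∘ f) c K ∧ Ioo K.1 K.2 ⊆ Ioo I.1 I.2 ∧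
      MapsTo f (Ioo K.1 K.2) (Ioo J.1 J.2) := by
  have hJ₁ := hJ.neg_le_fst
  have hJ₂ := hJ.snd_le
  have hI₁ := hI.neg_le_fst
  have hI₂ := hI.snd_le
  rcases hI.onOppositeSides with ⟨hl, hr⟩ | ⟨hl, hr⟩
  · obtain ⟨u, v, hu, huv, hv, hfu, hfv, hmaps⟩ := exists_Ioo_mapsTo_Ioo hI.fst_lt_snd.le hf
      (by linarith) hJ.fst_lt_snd (by linarith)
    refine ⟨(u, v), ⟨by linarith, huv, by linarith, ?_⟩, Ioo_subset_Ioo hu hv, hmaps⟩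
    simpa only [comp_apply, hfu, hfv] using hJ.onOppositeSides
  · obtain ⟨u, v, hu, huv, hv, hfu, hfv, hmaps⟩ := exists_Ioo_mapsTo_Ioo' hI.fst_lt_snd.le hf
      (by linarith) hJ.fst_lt_snd (by linarith)
    refine ⟨(u, v), ⟨by linarith, huv, by linarith, ?_⟩, Ioo_subset_Ioo hu hv, hmaps⟩
    simpa only [comp_apply, hfu, hfv] using hJ.onOppositeSides.symm

end IsLap

structure IsLapFamily (h : ℝ → ℝ) (c : ℝ) {ι : Type*} (I : ι → ℝ × ℝ) : Prop where
  isLap : ∀ i, IsLap h c (I i)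
  pairwise_disjoint : Pairwise (Disjoint on fun i => Ioo (I i).1 (I i).2)

namespace IsLapFamily

variable {f g h : ℝ → ℝ} {c : ℝ} {ι κ : Type*} {I : ι → ℝ × ℝ} {J : κ → ℝ × ℝ}

theorem comp_equiv (hI : IsLapFamily h c I) {ι' : Type*} (e : ι' ≃ ι) :
    IsLapFamily h c (I ∘ e) :=
  ⟨fun i => hI.isLap (e i), hI.pairwise_disjoint.comp_of_injective e.injective⟩

theorem comp (hI : IsLapFamily f c I) (hJ : IsLapFamily g c J) (hf : Continuous f) :
    ∃ K : ι × κ → ℝ × ℝ, IsLapFamily (g ∘ f) c K := by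
  choose K hK hsub hmaps using fun p : ι × κ =>
    (hI.isLap p.1).exists_comp (hJ.isLap p.2) hf.continuousOn
  refine ⟨K, hK, fun ⟨i, j⟩ ⟨i', j'⟩ hne => ?_⟩
  by_cases hii : i = i'
  · subst hii
    have hjj : j ≠ j' := fun h => hne (by rw [h])
    exact ((hJ.pairwise_disjoint hjj).preimage f).mono (hmaps _) (hmaps _)
  · exact (hI.pairwise_disjoint hii).mono (hsub _) (hsub _)

theorem iterate {t : ℕ} {J : Fin t → ℝ × ℝ} (hJ : IsLapFamily g c J) (hg : Continuous g)
    {m : ℕ} (hm : 1 ≤ m) : ∃ I : Fin (t ^ m) → ℝ × ℝ, IsLapFamily g^[m] c I := by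
  induction m, hm using Nat.le_induction with
  | base => exact ⟨J ∘ finCongr (pow_one t), hJ.comp_equiv _⟩
  | succ m _ ih =>
    obtain ⟨I, hI⟩ := ih
    obtain ⟨K, hK⟩ := hI.comp hJ (hg.iterate m)
    rw [iterate_succ']
    exact ⟨_, hK.comp_equiv ((finCongr (pow_succ t m)).trans finProdFinEquiv.symm)⟩

theorem card_le_ncard [Finite ι] (hI : IsLapFamily h c I) (hh : Continuous h)
    (hS : {x | h x = -x}.Finite) : Nat.card ι ≤ {x | h x = -x}.ncard := by
  choose ρ hρ hρroot using fun i => (hI.isLap i).exists_root hh.continuousOn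
  have hinj : Injective ρ := fun i j hij => by
    by_contra hne
    exact Set.disjoint_left.1 (hI.pairwise_disjoint hne) (hρ i) (hij ▸ hρ j)
  rw [← ncard_range_of_injective hinj]
  exact ncard_le_ncard (range_subset_iff.2 hρroot) hS

end IsLapFamily

theorem Polynomial.setOf_eval_eq_neg_finite_and_ncard_le {p : ℝ[X]} {x₀ : ℝ}
    (hx₀ : p.eval x₀ ≠ -x₀) :
    {x | p.eval x = -x}.Finite ∧ {x | p.eval x = -x}.ncard ≤ (p + X).natDegree := by
  have hQ : p + X ≠ 0 := fun h => hx₀ <| eq_neg_of_add_eq_zero_left <| by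
    simpa using congrArg (eval x₀) h
  have hS : {x | p.eval x = -x} = (p + X).rootSet ℝ := by
    ext x
    simp [mem_rootSet, hQ, eq_neg_iff_add_eq_zero]
  rw [hS]
  exact ⟨rootSet_finite _ _, ncard_rootSet_le _ _⟩

theorem mul_prod_sq_sub_sq (k : ℕ) (x : ℝ) :
    x * ∏ j ∈ Finset.Icc 1 k, (x ^ 2 - (j : ℝ) ^ 2) =
      ∏ i ∈ range (2 * k + 1), (x + k - i) := by
  induction k with
  | zero => simp
  | succ k ih =>
    have hshift : ∀ i ∈ range (2 * k + 1),
        x + ((k + 1 : ℕ) : ℝ) - ((i + 1 : ℕ) : ℝ) = x + k - i := fun i _ => by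
      push_cast
      ring
    rw [Finset.prod_Icc_succ_top (by omega), ← mul_assoc, ih,
      show 2 * (k + 1) + 1 = 2 * k + 1 + 1 + 1 by ring]
    conv_rhs => rw [prod_range_succ, prod_range_succ', prod_congr rfl hshift]
    push_cast
    ring

theorem half_pow_le_abs_prod (n j : ℕ) :
    (1 / 2 : ℝ) ^ n ≤ |∏ i ∈ range n, ((j : ℝ) - i - 1 / 2)| := by
  calc (1 / 2 : ℝ) ^ n = ∏ _i ∈ range n, (1 / 2 : ℝ) := by simp
    _ ≤ ∏ i ∈ range n, |(j : ℝ) - i - 1 / 2| :=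
      prod_le_prod (fun _ _ => by positivity) fun i _ => ?_
    _ = _ := (abs_prod _ _).symm
  rcases lt_or_ge i j with hij | hij
  · have : (i : ℝ) + 1 ≤ j := by exact_mod_cast hij
    rw [abs_of_pos (by linarith)]
    linarith
  · have : (j : ℝ) ≤ i := by exact_mod_cast hij
    rw [abs_of_neg (by linarith)]
    linarith

/-- The two products share `n - 1` factors; the remaining ones are `j - (n - 1) - 1/2 < 0` and
`j + 1/2 > 0`. -/
theorem prod_mul_prod_succ_neg {n j : ℕ} (hj : j < n) :
    (∏ i ∈ range n, ((j : ℝ) - i - 1 / 2)) *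
      ∏ i ∈ range n, (((j + 1 : ℕ) : ℝ) - i - 1 / 2) < 0 := by
  obtain ⟨n, rfl⟩ := Nat.exists_eq_add_of_lt hj
  have hshift : ∀ i ∈ range (j + n),
      ((j + 1 : ℕ) : ℝ) - ((i + 1 : ℕ) : ℝ) - 1 / 2 = j - i - 1 / 2 := fun i _ => by
    push_cast
    ring
  rw [prod_range_succ, prod_range_succ', prod_congr rfl hshift, mul_mul_mul_comm, ← sq]
  refine mul_neg_of_pos_of_neg (even_two.pow_pos (abs_pos.1 ?_)) ?_
  · exact (half_pow_le_abs_prod _ _).trans_lt' (by positivity)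
  · push_cast
    nlinarith

/-- `b ∏_{r = -k}^{k} (X - r)`, the factored form of `b X ∏_{j = 1}^{k} (X² - j²)`. -/
noncomputable def symmetricRootsPoly (k : ℕ) (b : ℝ) : ℝ[X] :=
  C b * ∏ i ∈ range (2 * k + 1), (X - C ((i : ℝ) - k))

theorem eval_symmetricRootsPoly (k : ℕ) (b x : ℝ) :
    (symmetricRootsPoly k b).eval x = b * ∏ i ∈ range (2 * k + 1), (x + k - i) := by
  simp only [symmetricRootsPoly, eval_mul, eval_C, eval_prod, eval_sub, eval_X]
  exact congrArg _ (prod_congr rfl fun _ _ => by ring)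

theorem natDegree_symmetricRootsPoly (k : ℕ) {b : ℝ} (hb : b ≠ 0) :
    (symmetricRootsPoly k b).natDegree = 2 * k + 1 := by
  rw [symmetricRootsPoly, natDegree_C_mul hb, natDegree_finsetProd_X_sub_C_eq_card, card_range]

theorem isLapFamily_symmetricRootsPoly {k : ℕ} {b c : ℝ} (hc : k + 1 / 2 ≤ c)
    (hb : c * 2 ^ (2 * k + 1) < b) :
    IsLapFamily (fun x => (symmetricRootsPoly k b).eval x) c
      fun j : Fin (2 * k + 1) => ((j : ℝ) - k - 1 / 2, (j : ℝ) - k + 1 / 2) := by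
  have hb0 : 0 < b := by
    have : (0 : ℝ) < c := by linarith [(Nat.cast_nonneg k : (0 : ℝ) ≤ k)]
    exact hb.trans' (by positivity)
  have hval : ∀ j : ℕ, (symmetricRootsPoly k b).eval ((j : ℝ) - k - 1 / 2) =
      b * ∏ i ∈ range (2 * k + 1), ((j : ℝ) - i - 1 / 2) := fun j => by
    rw [eval_symmetricRootsPoly]
    exact congrArg _ (prod_congr rfl fun _ _ => by ring)
  have hval' : ∀ j : ℕ, (symmetricRootsPoly k b).eval ((j : ℝ) - k + 1 / 2) =
      b * ∏ i ∈ range (2 * k + 1), (((j + 1 : ℕ) : ℝ) - i - 1 / 2) := fun j => by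
    rw [← hval]
    congr 1
    push_cast
    ring
  have hbig : ∀ j : ℕ, c < |b * ∏ i ∈ range (2 * k + 1), ((j : ℝ) - i - 1 / 2)| := by
    intro j
    rw [abs_mul, abs_of_pos hb0]
    calc c < b * (1 / 2) ^ (2 * k + 1) := by
          rwa [div_pow, one_pow, mul_one_div, lt_div_iff₀ (by positivity)]
      _ ≤ _ := mul_le_mul_of_nonneg_left (half_pow_le_abs_prod _ _) hb0.le
  refine ⟨fun j => ⟨?_, by linarith, ?_, ?_⟩, fun i j hij => ?_⟩
  · linarith [(Nat.cast_nonneg j : (0 : ℝ) ≤ j)]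
  · have : (j : ℝ) ≤ 2 * k := by exact_mod_cast Nat.lt_succ_iff.1 j.isLt
    linarith
  · rw [hval, hval']
    refine onOppositeSides_of_mul_neg (hbig j) (hbig (j + 1)) ?_
    rw [mul_mul_mul_comm]
    exact mul_neg_of_pos_of_neg (by positivity) (prod_mul_prod_succ_neg j.isLt)
  · wlog h : i < j generalizing i j
    · exact (this j i hij.symm (lt_of_le_of_ne (not_lt.1 h) hij.symm)).symm
    have : (i : ℝ) + 1 ≤ j := by exact_mod_cast (h : (i : ℕ) < j)
    exact Set.disjoint_left.2 fun x hx hx' => by linarith [hx.2, hx'.1]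

theorem stmt_15_general (k : ℕ) :
    ∃ B : ℝ, 0 < B ∧ ∀ b : ℝ, B ≤ b →
      ((∀ x : ℝ,
          (b * (-x) * ∏ j ∈ Finset.Icc 1 k, ((-x) ^ 2 - (j : ℝ) ^ 2))
            = -(b * x * ∏ j ∈ Finset.Icc 1 k, (x ^ 2 - (j : ℝ) ^ 2))) ∧
       ∀ m : ℕ, 1 ≤ m →
        {x : ℝ | (fun y : ℝ => b * y * ∏ j ∈ Finset.Icc 1 k, (y ^ 2 - (j : ℝ) ^ 2))^[m] x
          = -x}.ncard = (2 * k + 1) ^ m) := by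
  refine ⟨(k + 1) * 2 ^ (2 * k + 1) + 1, by positivity,
    fun b hb => ⟨fun x => ?_, fun m hm => ?_⟩⟩
  · simp only [neg_sq]
    ring
  have hb0 : 0 < b := hb.trans_lt' (by positivity)
  set P := symmetricRootsPoly k b
  have hP : (fun y => b * y * ∏ j ∈ Finset.Icc 1 k, (y ^ 2 - (j : ℝ) ^ 2)) =
      fun y => P.eval y := by
    ext y
    rw [eval_symmetricRootsPoly, ← mul_prod_sq_sub_sq, mul_assoc]
  have hiter : (fun y => P.eval y)^[m] = fun y => (P.comp^[m] X).eval y := by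
    ext y
    simp
  obtain ⟨I, hI⟩ := (isLapFamily_symmetricRootsPoly (c := k + 1) (by linarith)
    (by linarith)).iterate P.continuous hm
  rw [hiter] at hI
  rw [hP, hiter]
  obtain ⟨hfin, hle⟩ := setOf_eval_eq_neg_finite_and_ncard_le
    (hI.isLap ⟨0, by positivity⟩).apply_fst_ne_neg
  refine le_antisymm (hle.trans ?_)
    (by simpa using hI.card_le_ncard (P.comp^[m] X).continuous hfin)
  refine (natDegree_add_le _ _).trans (max_le ?_ ?_)
  · simp [P, natDegree_symmetricRootsPoly k hb0.ne']
  · simpa using Nat.one_le_pow _ _ (by omega)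

theorem stmt_15 (k : ℕ) (hk : 1 ≤ k) :
    ∃ B : ℝ, 0 < B ∧ ∀ b : ℝ, B ≤ b →
      ((∀ x : ℝ,
          (b * (-x) * ∏ j ∈ Finset.Icc 1 k, ((-x) ^ 2 - (j : ℝ) ^ 2))
            = -(b * x * ∏ j ∈ Finset.Icc 1 k, (x ^ 2 - (j : ℝ) ^ 2))) ∧
       ∀ m : ℕ, 1 ≤ m →
        {x : ℝ | (fun y : ℝ => b * y * ∏ j ∈ Finset.Icc 1 k, (y ^ 2 - (j : ℝ) ^ 2))^[m] x
          = -x}.ncard = (2 * k + 1) ^ m) :=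
  stmt_15_general k
end
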